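/- arXiv:1801.02473 — 5 statements merged into one kernel-verified Lean document; each statement's English description precedes it below -/
import Mathlib

section
/- Let Δ : S(X) → S(Y) be a surjective isometry between the unit spheres of two Banach spaces, and let M be a convex subset of S(X). Then M is a maximal proper face of the closed unit ball B_X if and only if Δ(M) (the image of M under Δ) is a maximal proper face of the closed unit ball B_Y. -/
/-!
Proper faces of the unit ball lie in the unit sphere, and by Hahn–Banach every convex subset of
the sphere lies in a face `{x | ‖x‖ ≤ 1, f x = 1}` with `‖f‖ ≤ 1`; hence the maximal proper faces
are exactly the maximal convex subsets of the sphere, and it suffices to show that `Δ` and its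
inverse map these to each other.

By Tanaka's lemma, `Δ` preserves the relation `‖x + y‖ = 2` in both directions. A maximal convex
subset `M` of the sphere consists of all unit vectors `y` with `‖x + y‖ = 2` for every `x ∈ M`,
and this description passes to `Δ(M)`. Convexity of `Δ(M)` is the one point needing care: the
relation is only pairwise, so for `x, x₁, x₂ ∈ M` we use that every unit vector at distance `2`
from `-p`, where `p ∈ M` is a barycentre of the three points, is also at distance `2` from
`-x`, `-x₁`, `-x₂`; then a maximal convex set through `Δ p` contains `Δ x`, `Δ x₁`, `Δ x₂`.
-/

/-- `F` is a face of the convex set `C`: a nonempty convex subset of `C` such that whenever a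
nontrivial convex combination of two points of `C` lies in `F`, both points lie in `F`. -/
def IsFace {X : Type*} [NormedAddCommGroup X] [NormedSpace ℝ X] (C F : Set X) : Prop :=
  F.Nonempty ∧ F ⊆ C ∧ Convex ℝ F ∧
    ∀ ⦃x : X⦄, x ∈ C → ∀ ⦃y : X⦄, y ∈ C → ∀ ⦃α : ℝ⦄, 0 < α → α < 1 →
      α • x + (1 - α) • y ∈ F → x ∈ F ∧ y ∈ F

/-- `F` is a maximal proper face of the convex set `C`: a proper face of `C` which is not
strictly contained in any other proper face of `C`. -/
def IsMaximalProperFace {X : Type*} [NormedAddCommGroup X] [NormedSpace ℝ X]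
    (C F : Set X) : Prop :=
  IsFace C F ∧ F ≠ C ∧ ∀ G : Set X, IsFace C G → G ≠ C → F ⊆ G → G = F

open Metric Set

section UnitSphere

variable {E : Type*} [NormedAddCommGroup E] [NormedSpace ℝ E]

def ConvexInUnitSphere (K : Set E) : Prop :=
  Convex ℝ K ∧ K ⊆ sphere 0 1

lemma apply_le_norm_of_norm_le_one {f : E →L[ℝ] ℝ} (hf : ‖f‖ ≤ 1) (x : E) : f x ≤ ‖x‖ :=
  (Real.le_norm_self _).trans ((f.le_opNorm x).trans (mul_le_of_le_one_left (norm_nonneg x) hf))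

def dualFace (f : E →L[ℝ] ℝ) : Set E :=
  {x ∈ closedBall 0 1 | f x = 1}

lemma convexInUnitSphere_dualFace {f : E →L[ℝ] ℝ} (hf : ‖f‖ ≤ 1) :
    ConvexInUnitSphere (dualFace f) := by
  refine ⟨(convex_closedBall 0 1).inter (convex_hyperplane f.toLinearMap.isLinear 1), ?_⟩
  rintro x ⟨hx, hfx⟩
  rw [mem_closedBall_zero_iff] at hx
  rw [mem_sphere_zero_iff_norm]
  exact hx.antisymm (hfx ▸ apply_le_norm_of_norm_le_one hf x)

lemma isFace_dualFace {f : E →L[ℝ] ℝ} (hf : ‖f‖ ≤ 1) (hne : (dualFace f).Nonempty) :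
    IsFace (closedBall 0 1) (dualFace f) := by
  refine ⟨hne, sep_subset _ _, (convexInUnitSphere_dualFace hf).1, ?_⟩
  intro x hx y hy α hα hα1 hxy
  have hfx : f x ≤ 1 := (apply_le_norm_of_norm_le_one hf x).trans (mem_closedBall_zero_iff.1 hx)
  have hfy : f y ≤ 1 := (apply_le_norm_of_norm_le_one hf y).trans (mem_closedBall_zero_iff.1 hy)
  have hcomb : α * f x + (1 - α) * f y = 1 := by simpa using hxy.2
  exact ⟨⟨hx, by nlinarith⟩, ⟨hy, by nlinarith⟩⟩

lemma dualFace_ne_closedBall (f : E →L[ℝ] ℝ) : dualFace f ≠ closedBall 0 1 := by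
  intro h
  have h0 : (0 : E) ∈ dualFace f := h ▸ mem_closedBall_self zero_le_one
  simp [dualFace] at h0

lemma exists_subset_dualFace {K : Set E} (hK : ConvexInUnitSphere K) :
    ∃ f : E →L[ℝ] ℝ, ‖f‖ ≤ 1 ∧ K ⊆ dualFace f := by
  have hdisj : Disjoint (ball (0 : E) 1) K := by
    refine disjoint_left.2 fun x hx hxK => ?_
    rw [mem_ball_zero_iff, mem_sphere_zero_iff_norm.1 (hK.2 hxK)] at hx
    exact lt_irrefl _ hx
  obtain ⟨f, u, hball, hKu⟩ :=
    geometric_hahn_banach_open (convex_ball 0 1) isOpen_ball hK.1 hdisj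
  have hu : 0 < u := by simpa using hball 0 (mem_ball_self one_pos)
  have hg : ‖u⁻¹ • f‖ ≤ 1 := by
    have hpolar : u⁻¹ • f ∈ StrongDual.polar ℝ (ball (0 : E) 1) := by
      refine (StrongDual.mem_polar_iff ℝ _).2 fun z hz => ?_
      have hneg : -z ∈ ball (0 : E) 1 := by rwa [mem_ball_zero_iff, norm_neg, ← mem_ball_zero_iff]
      have h₁ := hball z hz
      have h₂ := hball (-z) hneg
      rw [map_neg] at h₂
      rw [smul_apply, smul_eq_mul, norm_mul, norm_inv, Real.norm_of_nonneg hu.le,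
        inv_mul_le_iff₀ hu, mul_one, Real.norm_eq_abs, abs_le]
      constructor <;> linarith
    simpa [NormedSpace.polar_ball one_pos] using hpolar
  refine ⟨u⁻¹ • f, hg, fun x hx => ⟨?_, le_antisymm ?_ ?_⟩⟩
  · rw [mem_closedBall_zero_iff, mem_sphere_zero_iff_norm.1 (hK.2 hx)]
  · simpa only [mem_sphere_zero_iff_norm.1 (hK.2 hx)] using apply_le_norm_of_norm_le_one hg x
  · rw [smul_apply, smul_eq_mul, le_inv_mul_iff₀ hu, mul_one]
    exact hKu x hx

lemma subset_sphere_of_isFace_closedBall {G : Set E} (hG : IsFace (closedBall 0 1) G)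
    (hGne : G ≠ closedBall 0 1) : G ⊆ sphere 0 1 := by
  intro x hx
  have hx1 : ‖x‖ ≤ 1 := mem_closedBall_zero_iff.1 (hG.2.1 hx)
  refine mem_sphere_zero_iff_norm.2 (hx1.antisymm (not_lt.1 fun hlt => hGne ?_))
  refine hG.2.1.antisymm fun y hy => ?_
  rw [mem_closedBall_zero_iff] at hy
  -- if `‖x‖ < 1`, then `x` lies strictly between `y` and a point `w` of the ball
  set s := (1 - ‖x‖) / 2
  have hs : 0 < s := by simp only [s]; linarith
  have hs1 : s < 1 := by simp only [s]; linarith [norm_nonneg x]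
  set w := (1 - s)⁻¹ • (x - s • y)
  have hw : ‖w‖ ≤ 1 := by
    have : ‖x - s • y‖ ≤ 1 - s :=
      calc ‖x - s • y‖ ≤ ‖x‖ + ‖s • y‖ := norm_sub_le _ _
        _ = ‖x‖ + s * ‖y‖ := by rw [norm_smul, Real.norm_of_nonneg hs.le]
        _ ≤ 1 - s := by simp only [s]; nlinarith
    rw [norm_smul, norm_inv, Real.norm_of_nonneg (by linarith), inv_mul_le_iff₀ (by linarith),
      mul_one]
    exact this
  have hxyw : s • y + (1 - s) • w = x := by
    simp only [w]
    rw [smul_inv_smul₀ (by linarith)]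
    abel
  exact (hG.2.2.2 (mem_closedBall_zero_iff.2 hy) (mem_closedBall_zero_iff.2 hw) hs hs1
    (hxyw ▸ hx)).1

theorem isMaximalProperFace_closedBall_iff {M : Set E} :
    IsMaximalProperFace (closedBall 0 1) M ↔ M.Nonempty ∧ Maximal ConvexInUnitSphere M := by
  constructor
  · rintro ⟨hface, hproper, hmax⟩
    refine ⟨hface.1, ⟨hface.2.2.1, subset_sphere_of_isFace_closedBall hface hproper⟩,
      fun K hK hMK => ?_⟩
    obtain ⟨f, hf, hKf⟩ := exists_subset_dualFace hK
    have hface_f := isFace_dualFace hf (hface.1.mono (hMK.trans hKf))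
    exact hKf.trans (hmax _ hface_f (dualFace_ne_closedBall f) (hMK.trans hKf)).le
  · rintro ⟨hne, hM, hmax⟩
    obtain ⟨f, hf, hMf⟩ := exists_subset_dualFace hM
    have hfM : dualFace f = M := (hmax (convexInUnitSphere_dualFace hf) hMf).antisymm hMf
    refine ⟨hfM ▸ isFace_dualFace hf (hfM ▸ hne), hfM ▸ dualFace_ne_closedBall f,
      fun G hG hGne hMG => ?_⟩
    exact (hmax ⟨hG.2.2.1, subset_sphere_of_isFace_closedBall hG hGne⟩ hMG).antisymm hMG

lemma ConvexInUnitSphere.norm_add_eq_two {K : Set E} (hK : ConvexInUnitSphere K) {x y : E}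
    (hx : x ∈ K) (hy : y ∈ K) : ‖x + y‖ = 2 := by
  have hmid : ‖(1 / 2 : ℝ) • x + (1 / 2 : ℝ) • y‖ = 1 :=
    mem_sphere_zero_iff_norm.1 (hK.2 (hK.1 hx hy (by norm_num) (by norm_num) (by norm_num)))
  rw [← smul_add, norm_smul, Real.norm_of_nonneg (by norm_num)] at hmid
  linarith

lemma segment_subset_sphere_of_norm_add_eq_two {x y : E} (hx : ‖x‖ = 1) (hy : ‖y‖ = 1)
    (h : ‖x + y‖ = 2) : segment ℝ x y ⊆ sphere 0 1 := by
  obtain ⟨f, hf, hfxy⟩ := exists_dual_vector ℝ (x + y) (by rw [h]; norm_num)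
  have hfx := apply_le_norm_of_norm_le_one hf.le x
  have hfy := apply_le_norm_of_norm_le_one hf.le y
  rw [map_add, h] at hfxy
  have hxf : x ∈ dualFace f := ⟨mem_closedBall_zero_iff.2 hx.le, by push_cast at hfxy; linarith⟩
  have hyf : y ∈ dualFace f := ⟨mem_closedBall_zero_iff.2 hy.le, by push_cast at hfxy; linarith⟩
  exact ((convexInUnitSphere_dualFace hf.le).1.segment_subset hxf hyf).trans
    (convexInUnitSphere_dualFace hf.le).2

lemma norm_add_eq_two_of_mem_openSegment {x y z p : E} (hx : ‖x‖ ≤ 1) (hy : ‖y‖ ≤ 1)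
    (hz : ‖z‖ ≤ 1) (hp : p ∈ openSegment ℝ x y) (h : ‖z + p‖ = 2) :
    ‖z + x‖ = 2 ∧ ‖z + y‖ = 2 := by
  obtain ⟨a, b, ha, hb, hab, rfl⟩ := hp
  have hzx : ‖z + x‖ ≤ 2 := (norm_add_le z x).trans (by linarith)
  have hzy : ‖z + y‖ ≤ 2 := (norm_add_le z y).trans (by linarith)
  have hsplit : z + (a • x + b • y) = a • (z + x) + b • (z + y) := by
    obtain rfl : b = 1 - a := by linarith
    module
  have : 2 ≤ a * ‖z + x‖ + b * ‖z + y‖ :=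
    calc 2 = ‖a • (z + x) + b • (z + y)‖ := by rw [← hsplit, h]
      _ ≤ ‖a • (z + x)‖ + ‖b • (z + y)‖ := norm_add_le _ _
      _ = a * ‖z + x‖ + b * ‖z + y‖ := by
        rw [norm_smul, norm_smul, Real.norm_of_nonneg ha.le, Real.norm_of_nonneg hb.le]
  constructor <;> nlinarith

lemma exists_maximal_convexInUnitSphere_superset {K : Set E} (hK : ConvexInUnitSphere K) :
    ∃ D, K ⊆ D ∧ Maximal ConvexInUnitSphere D := by
  refine zorn_subset_nonempty {K | ConvexInUnitSphere K} (fun c hc hchain _ => ?_) K hK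
  refine ⟨⋃₀ c, ⟨hchain.directedOn.convex_sUnion fun A hA => (hc hA).1, ?_⟩,
    fun A hA => subset_sUnion_of_mem hA⟩
  exact sUnion_subset fun A hA => (hc hA).2

lemma Maximal.mem_of_forall_norm_add_eq_two {M : Set E} (hM : Maximal ConvexInUnitSphere M)
    (hne : M.Nonempty) {y : E} (hy : ‖y‖ = 1) (h : ∀ x ∈ M, ‖x + y‖ = 2) : y ∈ M := by
  have hjoin : ConvexInUnitSphere (convexJoin ℝ M {y}) := by
    refine ⟨hM.1.1.convexJoin (convex_singleton y), ?_⟩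
    simp only [convexJoin_singleton_right, iUnion_subset_iff]
    exact fun x hx => segment_subset_sphere_of_norm_add_eq_two
      (mem_sphere_zero_iff_norm.1 (hM.1.2 hx)) hy (h x hx)
  exact hM.2 hjoin (subset_convexJoin_left (singleton_nonempty y))
    (subset_convexJoin_right hne (mem_singleton y))

end UnitSphere

section SphereMap

variable {X Y : Type*} [NormedAddCommGroup X] [NormedAddCommGroup Y] [NormedSpace ℝ Y] {Δ : X → Y}

/-- Tanaka's lemma. -/
lemma norm_map_add_map_eq_two [NormedSpace ℝ X] (hmaps : MapsTo Δ (sphere 0 1) (sphere 0 1))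
    (hsurj : SurjOn Δ (sphere 0 1) (sphere 0 1))
    (hiso : ∀ x ∈ sphere (0 : X) 1, ∀ y ∈ sphere (0 : X) 1, ‖Δ x - Δ y‖ = ‖x - y‖)
    {x y : X} (hx : x ∈ sphere 0 1) (hy : y ∈ sphere 0 1) (h : ‖x + y‖ = 2) :
    ‖Δ x + Δ y‖ = 2 := by
  have hx1 := mem_sphere_zero_iff_norm.1 hx
  have hy1 := mem_sphere_zero_iff_norm.1 hy
  have hseg : openSegment ℝ x y ⊆ sphere 0 1 :=
    (openSegment_subset_segment ℝ x y).trans (segment_subset_sphere_of_norm_add_eq_two hx1 hy1 h)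
  -- For `z` strictly between `x` and `y`, write the antipode of `Δ z` as `Δ w`; then
  -- `‖z - w‖ = 2` forces `‖x - w‖ = 2`, i.e. `‖Δ x + Δ z‖ = 2`.
  have hflat : ∀ z ∈ openSegment ℝ x y, ‖Δ x + Δ z‖ = 2 := by
    intro z hz
    have hΔz := mem_sphere_zero_iff_norm.1 (hmaps (hseg hz))
    obtain ⟨w, hw, hwz⟩ :=
      hsurj (show -Δ z ∈ sphere (0 : Y) 1 by rwa [mem_sphere_zero_iff_norm, norm_neg])
    have hzw : ‖-w + z‖ = 2 := by
      rw [neg_add_eq_sub, ← hiso z (hseg hz) w hw, hwz, sub_neg_eq_add, ← two_smul ℝ, norm_smul,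
        hΔz]
      norm_num
    have hxw : ‖-w + x‖ = 2 := (norm_add_eq_two_of_mem_openSegment hx1.le hy1.le
      (by rw [norm_neg, mem_sphere_zero_iff_norm.1 hw]) hz hzw).1
    rwa [neg_add_eq_sub, ← hiso x hx w hw, hwz, sub_neg_eq_add] at hxw
  refine le_antisymm ((norm_add_le _ _).trans ?_) (le_of_forall_pos_le_add fun ε hε => ?_)
  · rw [mem_sphere_zero_iff_norm.1 (hmaps hx), mem_sphere_zero_iff_norm.1 (hmaps hy)]
    norm_num
  · obtain ⟨z, hz, hyz⟩ := Metric.mem_closure_iff.1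
      (segment_subset_closure_openSegment (right_mem_segment ℝ x y)) ε hε
    calc 2 = ‖(Δ x + Δ y) + (Δ z - Δ y)‖ := by rw [add_add_sub_cancel, hflat z hz]
      _ ≤ ‖Δ x + Δ y‖ + ‖Δ z - Δ y‖ := norm_add_le _ _
      _ ≤ ‖Δ x + Δ y‖ + ε := by
        rw [hiso z (hseg hz) y hy, ← dist_eq_norm, dist_comm]
        exact add_le_add_right hyz.le _

lemma norm_map_add_map_eq_two_iff [NormedSpace ℝ X] (hbij : BijOn Δ (sphere 0 1) (sphere 0 1))
    (hiso : ∀ x ∈ sphere (0 : X) 1, ∀ y ∈ sphere (0 : X) 1, ‖Δ x - Δ y‖ = ‖x - y‖)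
    {x y : X} (hx : x ∈ sphere 0 1) (hy : y ∈ sphere 0 1) :
    ‖Δ x + Δ y‖ = 2 ↔ ‖x + y‖ = 2 := by
  refine ⟨fun h => ?_, norm_map_add_map_eq_two hbij.mapsTo hbij.surjOn hiso hx hy⟩
  have : Nonempty X := ⟨x⟩
  have hinv := hbij.invOn_invFunOn
  have hbij' := hbij.symm hinv.symm
  have hiso' : ∀ y ∈ sphere (0 : Y) 1, ∀ y' ∈ sphere (0 : Y) 1,
      ‖Function.invFunOn Δ (sphere 0 1) y - Function.invFunOn Δ (sphere 0 1) y'‖ = ‖y - y'‖ :=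
    fun y hy y' hy' => by
      rw [← hiso _ (hbij'.mapsTo hy) _ (hbij'.mapsTo hy'), hinv.2 hy, hinv.2 hy']
  simpa only [hinv.1 hx, hinv.1 hy] using norm_map_add_map_eq_two hbij'.mapsTo hbij'.surjOn hiso'
    (hbij.mapsTo hx) (hbij.mapsTo hy) h

lemma Maximal.map_mem_of_dominates (hmaps : MapsTo Δ (sphere 0 1) (sphere 0 1))
    (hsurj : SurjOn Δ (sphere 0 1) (sphere 0 1))
    (hflat : ∀ x ∈ sphere (0 : X) 1, ∀ y ∈ sphere (0 : X) 1, ‖Δ x + Δ y‖ = 2 ↔ ‖x + y‖ = 2)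
    {D : Set Y} (hD : Maximal ConvexInUnitSphere D) {p x : X}
    (hp : p ∈ sphere 0 1) (hx : x ∈ sphere 0 1) (hpD : Δ p ∈ D)
    (hdom : ∀ z ∈ sphere (0 : X) 1, ‖z + p‖ = 2 → ‖z + x‖ = 2) : Δ x ∈ D := by
  refine hD.mem_of_forall_norm_add_eq_two ⟨_, hpD⟩ (mem_sphere_zero_iff_norm.1 (hmaps hx))
    fun d hd => ?_
  obtain ⟨z, hz, rfl⟩ := hsurj (hD.1.2 hd)
  exact (hflat z hz x hx).2 (hdom z hz ((hflat z hz p hp).1 (hD.1.norm_add_eq_two hd hpD)))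

lemma Maximal.image_convexInUnitSphere [NormedSpace ℝ X]
    (hmaps : MapsTo Δ (sphere 0 1) (sphere 0 1))
    (hsurj : SurjOn Δ (sphere 0 1) (sphere 0 1))
    (hflat : ∀ x ∈ sphere (0 : X) 1, ∀ y ∈ sphere (0 : X) 1, ‖Δ x + Δ y‖ = 2 ↔ ‖x + y‖ = 2)
    {M : Set X} (hM : Maximal ConvexInUnitSphere M)
    (hne : M.Nonempty) : Maximal ConvexInUnitSphere (Δ '' M) := by
  have hM1 : ∀ x ∈ M, ‖x‖ ≤ 1 := fun x hx => (mem_sphere_zero_iff_norm.1 (hM.1.2 hx)).le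
  have habsorb : ∀ y ∈ sphere (0 : Y) 1, (∀ n ∈ Δ '' M, ‖n + y‖ = 2) → y ∈ Δ '' M := by
    intro y hy h
    obtain ⟨x', hx', rfl⟩ := hsurj hy
    refine mem_image_of_mem Δ (hM.mem_of_forall_norm_add_eq_two hne
      (mem_sphere_zero_iff_norm.1 hx') fun x hx => ?_)
    exact (hflat x (hM.1.2 hx) x' hx').1 (h _ (mem_image_of_mem Δ hx))
  have hconv : Convex ℝ (Δ '' M) := by
    rintro _ ⟨x₁, hx₁, rfl⟩ _ ⟨x₂, hx₂, rfl⟩ a b ha hb hab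
    refine habsorb _ ?_ ?_
    · have h₁₂ := (hflat x₁ (hM.1.2 hx₁) x₂ (hM.1.2 hx₂)).2 (hM.1.norm_add_eq_two hx₁ hx₂)
      exact segment_subset_sphere_of_norm_add_eq_two
        (mem_sphere_zero_iff_norm.1 (hmaps (hM.1.2 hx₁)))
        (mem_sphere_zero_iff_norm.1 (hmaps (hM.1.2 hx₂))) h₁₂ ⟨a, b, ha, hb, hab, rfl⟩
    rintro _ ⟨x, hx, rfl⟩
    have hq : midpoint ℝ x₁ x₂ ∈ M := hM.1.1.midpoint_mem hx₁ hx₂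
    set p := midpoint ℝ x (midpoint ℝ x₁ x₂)
    have hp : p ∈ M := hM.1.1.midpoint_mem hx hq
    have hdom : ∀ z ∈ sphere (0 : X) 1, ‖z + p‖ = 2 →
        ‖z + x‖ = 2 ∧ ‖z + midpoint ℝ x₁ x₂‖ = 2 := fun z hz =>
      norm_add_eq_two_of_mem_openSegment (hM1 x hx) (hM1 _ hq) (mem_sphere_zero_iff_norm.1 hz).le
        (midpoint_mem_openSegment _ _)
    have hdom₁₂ : ∀ z ∈ sphere (0 : X) 1, ‖z + p‖ = 2 → ‖z + x₁‖ = 2 ∧ ‖z + x₂‖ = 2 :=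
      fun z hz h => norm_add_eq_two_of_mem_openSegment (hM1 x₁ hx₁) (hM1 x₂ hx₂)
        (mem_sphere_zero_iff_norm.1 hz).le (midpoint_mem_openSegment _ _) (hdom z hz h).2
    obtain ⟨D, hpD, hD⟩ := exists_maximal_convexInUnitSphere_superset (K := {Δ p})
      ⟨convex_singleton _, singleton_subset_iff.2 (hmaps (hM.1.2 hp))⟩
    have hmem : ∀ u ∈ M, (∀ z ∈ sphere (0 : X) 1, ‖z + p‖ = 2 → ‖z + u‖ = 2) → Δ u ∈ D :=
      fun u hu => hD.map_mem_of_dominates hmaps hsurj hflat (hM.1.2 hp) (hM.1.2 hu) (hpD rfl)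
    have hxD := hmem x hx fun z hz h => (hdom z hz h).1
    have hx₁D := hmem x₁ hx₁ fun z hz h => (hdom₁₂ z hz h).1
    have hx₂D := hmem x₂ hx₂ fun z hz h => (hdom₁₂ z hz h).2
    exact hD.1.norm_add_eq_two hxD (hD.1.1 hx₁D hx₂D ha hb hab)
  refine ⟨⟨hconv, (image_mono hM.1.2).trans hmaps.image_subset⟩, fun K hK hMK k hk => ?_⟩
  exact habsorb k (hK.2 hk) fun n hn => hK.norm_add_eq_two (hMK hn) hk

lemma maximal_convexInUnitSphere_image_iff [NormedSpace ℝ X]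
    (hbij : BijOn Δ (sphere 0 1) (sphere 0 1))
    (hflat : ∀ x ∈ sphere (0 : X) 1, ∀ y ∈ sphere (0 : X) 1, ‖Δ x + Δ y‖ = 2 ↔ ‖x + y‖ = 2)
    {M : Set X} (hMS : M ⊆ sphere 0 1) (hne : M.Nonempty) :
    Maximal ConvexInUnitSphere (Δ '' M) ↔ Maximal ConvexInUnitSphere M := by
  refine ⟨fun h => ?_, fun h => h.image_convexInUnitSphere hbij.mapsTo hbij.surjOn hflat hne⟩
  have : Nonempty X := hne.to_type
  have hinv := hbij.invOn_invFunOn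
  have hbij' := hbij.symm hinv.symm
  have hflat' : ∀ y ∈ sphere (0 : Y) 1, ∀ y' ∈ sphere (0 : Y) 1,
      ‖Function.invFunOn Δ (sphere 0 1) y + Function.invFunOn Δ (sphere 0 1) y'‖ = 2 ↔
        ‖y + y'‖ = 2 := fun y hy y' hy' => by
    rw [← hflat _ (hbij'.mapsTo hy) _ (hbij'.mapsTo hy'), hinv.2 hy, hinv.2 hy']
  simpa only [hbij.injOn.invFunOn_image hMS] using
    h.image_convexInUnitSphere hbij'.mapsTo hbij'.surjOn hflat' (hne.image Δ)

end SphereMap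

theorem surjective_sphere_isometry_maximal_face_iff_general
    {X Y : Type*} [NormedAddCommGroup X] [NormedSpace ℝ X]
    [NormedAddCommGroup Y] [NormedSpace ℝ Y]
    (Δ : X → Y)
    (hmap : ∀ x : X, ‖x‖ = 1 → ‖Δ x‖ = 1)
    (hsurj : ∀ y : Y, ‖y‖ = 1 → ∃ x : X, ‖x‖ = 1 ∧ Δ x = y)
    (hiso : ∀ x y : X, ‖x‖ = 1 → ‖y‖ = 1 → ‖Δ x - Δ y‖ = ‖x - y‖)
    (M : Set X) (hM : ∀ x ∈ M, ‖x‖ = 1) :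
    IsMaximalProperFace (Metric.closedBall (0 : X) 1) M ↔
      IsMaximalProperFace (Metric.closedBall (0 : Y) 1) (Δ '' M) := by
  have hiso' : ∀ x ∈ sphere (0 : X) 1, ∀ y ∈ sphere (0 : X) 1, ‖Δ x - Δ y‖ = ‖x - y‖ :=
    fun x hx y hy => hiso x y (mem_sphere_zero_iff_norm.1 hx) (mem_sphere_zero_iff_norm.1 hy)
  have hbij : BijOn Δ (sphere 0 1) (sphere 0 1) := by
    refine ⟨fun x hx => mem_sphere_zero_iff_norm.2 (hmap x (mem_sphere_zero_iff_norm.1 hx)),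
      fun x hx y hy hxy => ?_, fun y hy => ?_⟩
    · rw [← sub_eq_zero, ← norm_eq_zero, ← hiso' x hx y hy, hxy, sub_self, norm_zero]
    · obtain ⟨x, hx, rfl⟩ := hsurj y (mem_sphere_zero_iff_norm.1 hy)
      exact ⟨x, mem_sphere_zero_iff_norm.2 hx, rfl⟩
  have hMS : M ⊆ sphere 0 1 := fun x hx => mem_sphere_zero_iff_norm.2 (hM x hx)
  rw [isMaximalProperFace_closedBall_iff, isMaximalProperFace_closedBall_iff, image_nonempty]
  exact and_congr_right fun hne => (maximal_convexInUnitSphere_image_iff hbij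
    (fun x hx y hy => norm_map_add_map_eq_two_iff hbij hiso' hx hy) hMS hne).symm

/-- (Cheng–Dong; Tanaka) A surjective isometry between the unit spheres of two Banach spaces
maps maximal proper faces of the closed unit ball onto maximal proper faces of the closed
unit ball. -/
theorem surjective_sphere_isometry_maximal_face_iff
    {X Y : Type*} [NormedAddCommGroup X] [NormedSpace ℝ X] [CompleteSpace X]
    [NormedAddCommGroup Y] [NormedSpace ℝ Y] [CompleteSpace Y]
    (Δ : X → Y)
    (hmap : ∀ x : X, ‖x‖ = 1 → ‖Δ x‖ = 1)
    (hsurj : ∀ y : Y, ‖y‖ = 1 → ∃ x : X, ‖x‖ = 1 ∧ Δ x = y)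
    (hiso : ∀ x y : X, ‖x‖ = 1 → ‖y‖ = 1 → ‖Δ x - Δ y‖ = ‖x - y‖)
    (M : Set X) (hM : ∀ x ∈ M, ‖x‖ = 1) (hMconv : Convex ℝ M) :
    IsMaximalProperFace (Metric.closedBall (0 : X) 1) M ↔
      IsMaximalProperFace (Metric.closedBall (0 : Y) 1) (Δ '' M) :=
  surjective_sphere_isometry_maximal_face_iff_general Δ hmap hsurj hiso M hM
end

section
/- Let X and Y be real normed spaces and let Δ : S(X) → S(Y) be a surjective isometry between their unit spheres. Then for any x, y ∈ S(X), one has ‖x + y‖ = 2 if and only if ‖Δ(x) + Δ(y)‖ = 2. -/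
/-!
Let `w₀` be the point of `S(X)` with `Δ w₀ = -Δ y`; then `‖Δ x + Δ y‖ = ‖x - w₀‖`, so it suffices
to show `‖x - w₀‖ ≥ 2`. When `‖x + y‖ = 2` the whole segment `[y, x]` lies on the sphere. For
`z = (1 - t) y + t x` on it, the point `w` with `Δ w = -Δ z` satisfies `‖z - w‖ = 2`, and since
`‖y - w‖ ≤ 2`, convexity of the norm forces `‖x - w‖ ≥ 2`. Moreover
`‖w - w₀‖ = ‖Δ z - Δ y‖ = t ‖x - y‖`, hence `‖x - w₀‖ ≥ 2 - t ‖x - y‖`; let `t → 0`.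
The converse is the same statement for `Δ⁻¹`.
-/

open Metric Filter Topology

section NormedSpace

variable {E : Type*} [NormedAddCommGroup E] [NormedSpace ℝ E]

theorem norm_smul_add_smul_eq_one_of_norm_add_eq_two {x y : E} {a b : ℝ}
    (hx : ‖x‖ ≤ 1) (hy : ‖y‖ ≤ 1) (hxy : ‖x + y‖ = 2) (ha : 0 ≤ a) (hb : 0 ≤ b)
    (hab : a + b = 1) : ‖a • x + b • y‖ = 1 := by
  have convex_le_one (c d : ℝ) (hc : 0 ≤ c) (hd : 0 ≤ d) (hcd : c + d = 1) :
      ‖c • x + d • y‖ ≤ 1 := calc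
    ‖c • x + d • y‖ ≤ c * ‖x‖ + d * ‖y‖ := by
      simpa only [norm_smul, Real.norm_of_nonneg hc, Real.norm_of_nonneg hd]
        using norm_add_le (c • x) (d • y)
    _ ≤ 1 := by nlinarith
  have hsplit : x + y = (a • x + b • y) + (b • x + a • y) := calc
    x + y = (a + b) • x + (a + b) • y := by rw [hab, one_smul, one_smul]
    _ = (a • x + b • y) + (b • x + a • y) := by module
  have htri := norm_add_le (a • x + b • y) (b • x + a • y)
  rw [← hsplit, hxy] at htri
  linarith [convex_le_one a b ha hb hab, convex_le_one b a hb ha (by linarith)]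

theorem le_norm_sub_of_le_norm_smul_add_smul_sub {x y w : E} {r t : ℝ} (ht₀ : 0 < t)
    (ht₁ : t ≤ 1) (hy : ‖y - w‖ ≤ r) (hz : r ≤ ‖(1 - t) • y + t • x - w‖) : r ≤ ‖x - w‖ := by
  have hconv : ‖(1 - t) • y + t • x - w‖ ≤ (1 - t) * ‖y - w‖ + t * ‖x - w‖ := calc
    ‖(1 - t) • y + t • x - w‖ = ‖(1 - t) • (y - w) + t • (x - w)‖ := by congr 1; module
    _ ≤ (1 - t) * ‖y - w‖ + t * ‖x - w‖ := by
      simpa only [norm_smul, Real.norm_of_nonneg (sub_nonneg.2 ht₁), Real.norm_of_nonneg ht₀.le]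
        using norm_add_le ((1 - t) • (y - w)) (t • (x - w))
  nlinarith

end NormedSpace

section SphereIsometry

variable {X Y : Type*} [NormedAddCommGroup X] [NormedAddCommGroup Y]

theorem exists_isometryEquiv_sphere_of_surjective (Δ : X → Y)
    (hmap : ∀ x : X, ‖x‖ = 1 → ‖Δ x‖ = 1)
    (hsurj : ∀ y : Y, ‖y‖ = 1 → ∃ x : X, ‖x‖ = 1 ∧ Δ x = y)
    (hiso : ∀ x y : X, ‖x‖ = 1 → ‖y‖ = 1 → ‖Δ x - Δ y‖ = ‖x - y‖) :
    ∃ e : sphere (0 : X) 1 ≃ᵢ sphere (0 : Y) 1, ∀ x, (e x : Y) = Δ x := by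
  let f : sphere (0 : X) 1 → sphere (0 : Y) 1 := fun x =>
    ⟨Δ x, mem_sphere_zero_iff_norm.2 (hmap x (norm_eq_of_mem_sphere x))⟩
  have hf : Isometry f := Isometry.of_dist_eq fun x y => by
    simp only [Subtype.dist_eq, dist_eq_norm, f]
    exact hiso x y (norm_eq_of_mem_sphere x) (norm_eq_of_mem_sphere y)
  have hf_surj : Function.Surjective f := fun y => by
    obtain ⟨x, hx, hΔx⟩ := hsurj y (norm_eq_of_mem_sphere y)
    exact ⟨⟨x, mem_sphere_zero_iff_norm.2 hx⟩, Subtype.ext hΔx⟩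
  exact ⟨{ Equiv.ofBijective f ⟨hf.injective, hf_surj⟩ with isometry_toFun := hf }, fun _ => rfl⟩

namespace IsometryEquiv

variable (e : sphere (0 : X) 1 ≃ᵢ sphere (0 : Y) 1)

theorem norm_sub_apply_symm_neg (x y : sphere (0 : X) 1) :
    ‖(x : X) - e.symm (-e y)‖ = ‖(e x : Y) + e y‖ := by
  rw [← dist_eq_norm, ← Subtype.dist_eq, ← e.dist_eq, e.apply_symm_apply, Subtype.dist_eq,
    coe_neg_sphere, dist_eq_norm, sub_neg_eq_add]

variable [NormedSpace ℝ X] [NormedSpace ℝ Y]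

theorem two_sub_mul_le_norm_sub_apply_symm_neg {x y : sphere (0 : X) 1} (hxy : ‖(x : X) + y‖ = 2)
    {t : ℝ} (ht₀ : 0 < t) (ht₁ : t ≤ 1) :
    2 - t * ‖(x : X) - y‖ ≤ ‖(x : X) - e.symm (-e y)‖ := by
  have hx := (norm_eq_of_mem_sphere x).le
  have hy := (norm_eq_of_mem_sphere y).le
  let z : sphere (0 : X) 1 := ⟨(1 - t) • (y : X) + t • (x : X), mem_sphere_zero_iff_norm.2 <|
    norm_smul_add_smul_eq_one_of_norm_add_eq_two hy hx (by rwa [add_comm]) (by linarith)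
      ht₀.le (by ring)⟩
  set w := e.symm (-e z)
  have hxw : 2 ≤ ‖(x : X) - w‖ := by
    have hzw : ‖(z : X) - w‖ = 2 := by
      rw [e.norm_sub_apply_symm_neg, ← two_smul ℝ, norm_smul, norm_eq_of_mem_sphere]
      norm_num
    refine le_norm_sub_of_le_norm_smul_add_smul_sub ht₀ ht₁ ?_ hzw.ge
    simpa only [norm_eq_of_mem_sphere, one_add_one_eq_two] using norm_sub_le (y : X) w
  have hww₀ : ‖(w : X) - e.symm (-e y)‖ = t * ‖(x : X) - y‖ := calc
    ‖(w : X) - e.symm (-e y)‖ = ‖(z : X) - y‖ := by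
      rw [← dist_eq_norm, ← Subtype.dist_eq, e.symm.dist_eq, Subtype.dist_eq, coe_neg_sphere,
        coe_neg_sphere, dist_neg_neg, ← Subtype.dist_eq, e.dist_eq, Subtype.dist_eq, dist_eq_norm]
    _ = t * ‖(x : X) - y‖ := by
      rw [← norm_smul_of_nonneg ht₀.le]; congr 1; module
  linarith [norm_sub_le_norm_sub_add_norm_sub (x : X) (e.symm (-e y)) w,
    norm_sub_rev (w : X) (e.symm (-e y))]

theorem norm_add_apply_eq_two {x y : sphere (0 : X) 1} (hxy : ‖(x : X) + y‖ = 2) :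
    ‖(e x : Y) + e y‖ = 2 := by
  refine le_antisymm ?_ ?_
  · simpa only [norm_eq_of_mem_sphere, one_add_one_eq_two] using norm_add_le (e x : Y) (e y)
  · rw [← e.norm_sub_apply_symm_neg]
    have hlim : Tendsto (fun t : ℝ => 2 - t * ‖(x : X) - y‖) (𝓝[>] 0) (𝓝 2) := by
      refine tendsto_nhdsWithin_of_tendsto_nhds ?_
      simpa using (Continuous.tendsto (by fun_prop) 0 :
        Tendsto (fun t : ℝ => 2 - t * ‖(x : X) - y‖) (𝓝 0) _)
    refine le_of_tendsto hlim ?_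
    filter_upwards [Ioc_mem_nhdsGT zero_lt_one] with t ht
    exact e.two_sub_mul_le_norm_sub_apply_symm_neg hxy ht.1 ht.2

theorem norm_add_apply_eq_two_iff (x y : sphere (0 : X) 1) :
    ‖(e x : Y) + e y‖ = 2 ↔ ‖(x : X) + y‖ = 2 :=
  ⟨fun h => by simpa only [symm_apply_apply] using e.symm.norm_add_apply_eq_two h,
    e.norm_add_apply_eq_two⟩

end IsometryEquiv

end SphereIsometry

/-- (Fang–Wang, Ding) A surjective isometry between the unit spheres of two real normed
spaces preserves the relation `‖x + y‖ = 2`. -/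
theorem surjective_sphere_isometry_norm_add_eq_two_iff
    {X Y : Type*} [NormedAddCommGroup X] [NormedSpace ℝ X]
    [NormedAddCommGroup Y] [NormedSpace ℝ Y]
    (Δ : X → Y)
    (hmap : ∀ x : X, ‖x‖ = 1 → ‖Δ x‖ = 1)
    (hsurj : ∀ y : Y, ‖y‖ = 1 → ∃ x : X, ‖x‖ = 1 ∧ Δ x = y)
    (hiso : ∀ x y : X, ‖x‖ = 1 → ‖y‖ = 1 → ‖Δ x - Δ y‖ = ‖x - y‖) :
    ∀ x y : X, ‖x‖ = 1 → ‖y‖ = 1 → (‖x + y‖ = 2 ↔ ‖Δ x + Δ y‖ = 2) := by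
  intro x y hx hy
  obtain ⟨e, he⟩ := exists_isometryEquiv_sphere_of_surjective Δ hmap hsurj hiso
  have := e.norm_add_apply_eq_two_iff ⟨x, mem_sphere_zero_iff_norm.2 hx⟩
    ⟨y, mem_sphere_zero_iff_norm.2 hy⟩
  rwa [he, he, iff_comm] at this
end

section
/- Let Δ : S(X) → S(Y) be a surjective isometry between the unit spheres of two Banach spaces. If M is a maximal proper face of the closed unit ball B_X, then Δ(−M) = −Δ(M), where −M = {−x : x ∈ M}. -/
/-!
Let `m₀ ∈ M` and let `x ∈ S(X)` be a point with `Δ x = -Δ(-m₀)`; it suffices to show `x ∈ M`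
(applied to `M` and to the maximal face `-M`, this gives both inclusions).

A point `x` of the ball with `‖x + m‖ = 2` for every `m ∈ M` lies in `M`: the midpoints of `x`
and `M` form a convex set of norm-one vectors, and a Hahn–Banach functional separating it from the
open ball exposes a proper face containing both `M` and `x`, which is `M` by maximality.

To check `‖x + m‖ = 2`, put `c = (1 - t) m₀ + t m ∈ M` and let `Δ z = -Δ(-c)`. Then
`‖z + c‖ = ‖Δ z - Δ(-c)‖ = 2`, and since `‖z + m₀‖ ≤ 2` convexity of the norm forces
`‖z + m‖ ≥ 2`, while `‖x - z‖ = ‖Δ(-c) - Δ(-m₀)‖ = t ‖m - m₀‖ ≤ 2t`. Let `t → 0`.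
-/

open Metric

section Faces

variable {X : Type*} [NormedAddCommGroup X] [NormedSpace ℝ X]

lemma IsFace.neg {C F : Set X} (hF : IsFace C F) : IsFace (-C) (-F) := by
  obtain ⟨hne, hsub, hconv, hface⟩ := hF
  refine ⟨hne.neg, Set.neg_subset_neg.mpr hsub, hconv.neg, fun x hx y hy α hα0 hα1 hxy => ?_⟩
  have hxy' : α • -x + (1 - α) • -y ∈ F := by
    simpa only [Set.mem_neg, smul_neg, neg_add] using hxy
  exact hface hx hy hα0 hα1 hxy'

lemma IsMaximalProperFace.neg {C F : Set X} (hF : IsMaximalProperFace C F) :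
    IsMaximalProperFace (-C) (-F) := by
  obtain ⟨hface, hne, hmax⟩ := hF
  refine ⟨hface.neg, fun h => hne (neg_inj.mp h), fun G hG hGne hFG => ?_⟩
  have hG' : -G = F :=
    hmax (-G) (by simpa only [neg_neg] using hG.neg) (fun h => hGne (by rw [← h, neg_neg]))
      (by simpa only [Set.neg_subset, neg_neg] using hFG)
  rw [← hG', neg_neg]

lemma isFace_setOf_eq_of_forall_le {C : Set X} (hC : Convex ℝ C) (f : X →ₗ[ℝ] ℝ) {u : ℝ}
    (hf : ∀ z ∈ C, f z ≤ u) {z₀ : X} (hz₀ : z₀ ∈ C) (hfz₀ : f z₀ = u) :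
    IsFace C {z | z ∈ C ∧ f z = u} := by
  refine ⟨⟨z₀, hz₀, hfz₀⟩, fun z hz => hz.1,
    hC.inter (convex_hyperplane f.isLinear u), fun x hx y hy α hα0 hα1 hxy => ?_⟩
  have hsum : α * f x + (1 - α) * f y = u := by
    simpa only [map_add, map_smul, smul_eq_mul] using hxy.2
  have hfx := hf x hx
  have hfy := hf y hy
  exact ⟨⟨hx, by nlinarith⟩, ⟨hy, by nlinarith⟩⟩

lemma IsFace.norm_eq_one {F : Set X} (hF : IsFace (closedBall (0 : X) 1) F)
    (hne : F ≠ closedBall 0 1) {m : X} (hm : m ∈ F) : ‖m‖ = 1 := by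
  -- if `‖m‖ < 1`, then `m` lies strictly inside a segment from any `z` of the ball to some `y`
  refine (mem_closedBall_zero_iff.mp (hF.2.1 hm)).antisymm
    (not_lt.mp fun hlt => hne (hF.2.1.antisymm fun z hz => ?_))
  have hz1 : ‖z‖ ≤ 1 := mem_closedBall_zero_iff.mp hz
  set α : ℝ := (1 - ‖m‖) / 2
  have hα0 : 0 < α := by simp only [α]; linarith
  have hα1 : α < 1 := by simp only [α]; linarith [norm_nonneg m]
  set y : X := (1 - α)⁻¹ • (m - α • z)
  have hy : y ∈ closedBall (0 : X) 1 := by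
    rw [mem_closedBall_zero_iff, norm_smul_of_nonneg (inv_nonneg.mpr (by linarith)),
      inv_mul_le_one₀ (by linarith)]
    calc ‖m - α • z‖ ≤ ‖m‖ + α * ‖z‖ := by
          simpa only [norm_smul_of_nonneg hα0.le] using norm_sub_le m (α • z)
      _ ≤ 1 - α := by simp only [α] at *; nlinarith
  have hm' : α • z + (1 - α) • y = m := by
    simp only [y, smul_inv_smul₀ (sub_pos.mpr hα1).ne', add_sub_cancel]
  exact (hF.2.2.2 hz hy hα0 hα1 (hm' ▸ hm)).1

open scoped Pointwise in
lemma IsMaximalProperFace.mem_of_forall_norm_add_eq_two {M : Set X}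
    (hM : IsMaximalProperFace (closedBall (0 : X) 1) M) {x : X} (hx : ‖x‖ ≤ 1)
    (hxM : ∀ m ∈ M, ‖x + m‖ = 2) : x ∈ M := by
  obtain ⟨⟨⟨m₀, hm₀⟩, hMball, hMconv, -⟩, -, hmax⟩ := hM
  have hdisj : Disjoint (ball (0 : X) 1) ((2⁻¹ : ℝ) • (x +ᵥ M)) := by
    refine Set.disjoint_left.mpr ?_
    rintro _ hlt ⟨_, ⟨m, hm, rfl⟩, rfl⟩
    rw [mem_ball_zero_iff] at hlt
    change ‖(2⁻¹ : ℝ) • (x + m)‖ < 1 at hlt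
    rw [norm_smul_of_nonneg (by norm_num), hxM m hm] at hlt
    norm_num at hlt
  obtain ⟨f, u, hball, hmid⟩ := geometric_hahn_banach_open (convex_ball 0 1) isOpen_ball
    ((hMconv.vadd x).smul _) hdisj
  have hu : 0 < u := by simpa using hball 0 (mem_ball_self one_pos)
  have hle : ∀ z ∈ closedBall (0 : X) 1, f z ≤ u := by
    rw [← closure_ball 0 one_ne_zero]
    exact closure_minimal (fun z hz => (hball z hz).le) (isClosed_le f.continuous continuous_const)
  have hexposed : ∀ m ∈ M, f x = u ∧ f m = u := by
    intro m hm
    have h := hmid _ (Set.smul_mem_smul_set (Set.vadd_mem_vadd_set hm))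
    rw [vadd_eq_add, map_smul, map_add, smul_eq_mul] at h
    have := hle x (mem_closedBall_zero_iff.mpr hx)
    have := hle m (hMball hm)
    constructor <;> linarith
  have hface := isFace_setOf_eq_of_forall_le (convex_closedBall 0 1) f.toLinearMap hle
    (mem_closedBall_zero_iff.mpr hx) (hexposed m₀ hm₀).1
  have hproper : {z | z ∈ closedBall (0 : X) 1 ∧ f z = u} ≠ closedBall 0 1 := fun h => by
    have h0 : (0 : X) ∈ closedBall (0 : X) 1 := mem_closedBall_self zero_le_one
    rw [← h] at h0
    exact hu.ne (by simpa using h0.2)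
  rw [← hmax _ hface hproper fun m hm => ⟨hMball hm, (hexposed m hm).2⟩]
  exact ⟨mem_closedBall_zero_iff.mpr hx, (hexposed m₀ hm₀).1⟩

end Faces

lemma le_norm_of_le_norm_smul_add_smul {X : Type*} [NormedAddCommGroup X] [NormedSpace ℝ X]
    {v w : X} {a b r : ℝ} (ha : 0 ≤ a) (hb : 0 < b) (hab : a + b = 1) (hv : ‖v‖ ≤ r)
    (h : r ≤ ‖a • v + b • w‖) : r ≤ ‖w‖ := by
  have htri : ‖a • v + b • w‖ ≤ a * ‖v‖ + b * ‖w‖ := by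
    simpa only [norm_smul_of_nonneg ha, norm_smul_of_nonneg hb.le] using norm_add_le (a • v) (b • w)
  have har : a * ‖v‖ ≤ a * r := mul_le_mul_of_nonneg_left hv ha
  have hr : a * r + b * r = r := by rw [← add_mul, hab, one_mul]
  have hbr : b * r ≤ b * ‖w‖ := by linarith
  exact le_of_mul_le_mul_left hbr hb

lemma norm_add_eq_two_of_apply_eq_neg_apply_neg {X Y : Type*} [NormedAddCommGroup X]
    [NormedAddCommGroup Y] [NormedSpace ℝ Y] {Δ : X → Y}
    (hmap : ∀ x : X, ‖x‖ = 1 → ‖Δ x‖ = 1)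
    (hiso : ∀ x y : X, ‖x‖ = 1 → ‖y‖ = 1 → ‖Δ x - Δ y‖ = ‖x - y‖)
    {z c : X} (hz : ‖z‖ = 1) (hc : ‖c‖ = 1) (hΔz : Δ z = -Δ (-c)) : ‖z + c‖ = 2 := by
  have hnc : ‖-c‖ = 1 := by rwa [norm_neg]
  rw [← sub_neg_eq_add, ← hiso z (-c) hz hnc, hΔz, ← neg_add', norm_neg, ← two_smul ℝ,
    norm_smul, hmap _ hnc]
  norm_num

section SphereIsometry

variable {X Y : Type*} [NormedAddCommGroup X] [NormedSpace ℝ X]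
  [NormedAddCommGroup Y] [NormedSpace ℝ Y]

lemma IsMaximalProperFace.two_sub_two_mul_le_norm_add {Δ : X → Y}
    (hmap : ∀ x : X, ‖x‖ = 1 → ‖Δ x‖ = 1)
    (hsurj : ∀ y : Y, ‖y‖ = 1 → ∃ x : X, ‖x‖ = 1 ∧ Δ x = y)
    (hiso : ∀ x y : X, ‖x‖ = 1 → ‖y‖ = 1 → ‖Δ x - Δ y‖ = ‖x - y‖)
    {M : Set X} (hM : IsMaximalProperFace (closedBall (0 : X) 1) M) {m₀ x m : X} (hm₀ : m₀ ∈ M)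
    (hx : ‖x‖ = 1) (hΔx : Δ x = -Δ (-m₀)) (hm : m ∈ M) {t : ℝ} (ht0 : 0 < t) (ht1 : t ≤ 1) :
    2 - 2 * t ≤ ‖x + m‖ := by
  have hnorm : ∀ m ∈ M, ‖m‖ = 1 := fun m hm => hM.1.norm_eq_one hM.2.1 hm
  set c := (1 - t) • m₀ + t • m
  have hc : ‖c‖ = 1 :=
    hnorm c (hM.1.2.2.1 hm₀ hm (sub_nonneg.mpr ht1) ht0.le (sub_add_cancel 1 t))
  obtain ⟨z, hz, hΔz⟩ := hsurj (-Δ (-c)) (by rw [norm_neg, hmap _ (by rwa [norm_neg])])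
  have hzm : 2 ≤ ‖z + m‖ := by
    refine le_norm_of_le_norm_smul_add_smul (v := z + m₀) (sub_nonneg.mpr ht1) ht0
      (sub_add_cancel 1 t) ?_ ?_
    · exact (norm_add_le z m₀).trans_eq (by rw [hz, hnorm m₀ hm₀]; norm_num)
    · have hzc : (1 - t) • (z + m₀) + t • (z + m) = z + c := by
        simp only [c]; module
      rw [hzc, norm_add_eq_two_of_apply_eq_neg_apply_neg hmap hiso hz hc hΔz]
  have hzx : ‖z - x‖ ≤ 2 * t := by
    have hdiff : -m₀ - -c = t • (m - m₀) := by
      simp only [c]; module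
    rw [← hiso z x hz hx, hΔz, hΔx, neg_sub_neg, hiso _ _ (by rw [norm_neg, hnorm m₀ hm₀])
      (by rwa [norm_neg]), hdiff, norm_smul_of_nonneg ht0.le, mul_comm]
    exact mul_le_mul_of_nonneg_right
      ((norm_sub_le m m₀).trans_eq (by rw [hnorm m hm, hnorm m₀ hm₀]; norm_num)) ht0.le
  calc 2 - 2 * t ≤ ‖z + m‖ - ‖z - x‖ := by linarith
    _ ≤ ‖x + m‖ := by
      rw [sub_le_iff_le_add]
      calc ‖z + m‖ = ‖(x + m) + (z - x)‖ := by abel_nf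
        _ ≤ ‖x + m‖ + ‖z - x‖ := norm_add_le _ _

lemma IsMaximalProperFace.mem_of_apply_eq_neg_apply_neg {Δ : X → Y}
    (hmap : ∀ x : X, ‖x‖ = 1 → ‖Δ x‖ = 1)
    (hsurj : ∀ y : Y, ‖y‖ = 1 → ∃ x : X, ‖x‖ = 1 ∧ Δ x = y)
    (hiso : ∀ x y : X, ‖x‖ = 1 → ‖y‖ = 1 → ‖Δ x - Δ y‖ = ‖x - y‖)
    {M : Set X} (hM : IsMaximalProperFace (closedBall (0 : X) 1) M) {m₀ x : X} (hm₀ : m₀ ∈ M)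
    (hx : ‖x‖ = 1) (hΔx : Δ x = -Δ (-m₀)) : x ∈ M := by
  refine hM.mem_of_forall_norm_add_eq_two hx.le fun m hm => le_antisymm ?_ ?_
  · exact (norm_add_le x m).trans_eq (by rw [hx, hM.1.norm_eq_one hM.2.1 hm]; norm_num)
  refine le_of_forall_pos_le_add fun ε hε => ?_
  have h := hM.two_sub_two_mul_le_norm_add hmap hsurj hiso hm₀ hx hΔx hm
    (lt_min (half_pos hε) one_pos) (min_le_right (ε / 2) 1)
  linarith [min_le_left (ε / 2) 1]

lemma IsMaximalProperFace.exists_mem_apply_eq_neg_apply_neg {Δ : X → Y}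
    (hmap : ∀ x : X, ‖x‖ = 1 → ‖Δ x‖ = 1)
    (hsurj : ∀ y : Y, ‖y‖ = 1 → ∃ x : X, ‖x‖ = 1 ∧ Δ x = y)
    (hiso : ∀ x y : X, ‖x‖ = 1 → ‖y‖ = 1 → ‖Δ x - Δ y‖ = ‖x - y‖)
    {M : Set X} (hM : IsMaximalProperFace (closedBall (0 : X) 1) M) {m₀ : X} (hm₀ : m₀ ∈ M) :
    ∃ x ∈ M, Δ x = -Δ (-m₀) := by
  have hnm₀ : ‖-m₀‖ = 1 := by rw [norm_neg, hM.1.norm_eq_one hM.2.1 hm₀]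
  obtain ⟨x, hx, hΔx⟩ := hsurj (-Δ (-m₀)) (by rw [norm_neg, hmap _ hnm₀])
  exact ⟨x, hM.mem_of_apply_eq_neg_apply_neg hmap hsurj hiso hm₀ hx hΔx, hΔx⟩

end SphereIsometry

theorem surjective_sphere_isometry_image_neg_maximal_face_general
    {X Y : Type*} [NormedAddCommGroup X] [NormedSpace ℝ X]
    [NormedAddCommGroup Y] [NormedSpace ℝ Y]
    (Δ : X → Y)
    (hmap : ∀ x : X, ‖x‖ = 1 → ‖Δ x‖ = 1)
    (hsurj : ∀ y : Y, ‖y‖ = 1 → ∃ x : X, ‖x‖ = 1 ∧ Δ x = y)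
    (hiso : ∀ x y : X, ‖x‖ = 1 → ‖y‖ = 1 → ‖Δ x - Δ y‖ = ‖x - y‖)
    (M : Set X) (hM : IsMaximalProperFace (Metric.closedBall (0 : X) 1) M) :
    Δ '' (-M) = -(Δ '' M) := by
  have hnegM : IsMaximalProperFace (closedBall (0 : X) 1) (-M) := by
    simpa only [neg_closedBall, neg_zero] using hM.neg
  ext y
  constructor
  · rintro ⟨x, hx, rfl⟩
    obtain ⟨x', hx'M, hΔx'⟩ := hM.exists_mem_apply_eq_neg_apply_neg hmap hsurj hiso hx
    exact ⟨x', hx'M, by rw [hΔx', neg_neg]⟩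
  · rintro ⟨m, hm, hΔm⟩
    obtain ⟨x', hx'M, hΔx'⟩ :=
      hnegM.exists_mem_apply_eq_neg_apply_neg hmap hsurj hiso (Set.neg_mem_neg.mpr hm)
    exact ⟨x', hx'M, by rw [hΔx', neg_neg, hΔm, neg_neg]⟩

/-- (Mori; after Tingley) A surjective isometry between the unit spheres of two Banach spaces
maps the antipode of a maximal proper face of the closed unit ball onto the antipode of its
image: `Δ(−M) = −Δ(M)`. -/
theorem surjective_sphere_isometry_image_neg_maximal_face
    {X Y : Type*} [NormedAddCommGroup X] [NormedSpace ℝ X] [CompleteSpace X]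
    [NormedAddCommGroup Y] [NormedSpace ℝ Y] [CompleteSpace Y]
    (Δ : X → Y)
    (hmap : ∀ x : X, ‖x‖ = 1 → ‖Δ x‖ = 1)
    (hsurj : ∀ y : Y, ‖y‖ = 1 → ∃ x : X, ‖x‖ = 1 ∧ Δ x = y)
    (hiso : ∀ x y : X, ‖x‖ = 1 → ‖y‖ = 1 → ‖Δ x - Δ y‖ = ‖x - y‖)
    (M : Set X) (hM : IsMaximalProperFace (Metric.closedBall (0 : X) 1) M) :
    Δ '' (-M) = -(Δ '' M) :=
  surjective_sphere_isometry_image_neg_maximal_face_general Δ hmap hsurj hiso M hM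
end

section
/- Let Γ₁ and Γ₂ be index sets and let Δ : S(ℓ¹_ℝ(Γ₁)) → S(ℓ¹_ℝ(Γ₂)) be a surjective isometry between the unit spheres. Then there exist a bijection σ : Γ₂ → Γ₁ and signs θ_j ∈ {−1, 1} for j ∈ Γ₂ such that for every x ∈ S(ℓ¹_ℝ(Γ₁)) and every j ∈ Γ₂, (Δ(x))(j) = θ_j · x(σ(j)). In particular, Δ extends to a surjective real-linear isometry from ℓ¹_ℝ(Γ₁) onto ℓ¹_ℝ(Γ₂). -/
/-!
On the unit sphere of `ℓ¹`, the signed unit vectors `±eᵢ` are exactly the points whose set of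
antipodes (sphere points at distance `2`) is maximal: for `x` with `xᵢ ≠ 0`, every antipode of `x`
is an antipode of `sign(xᵢ) eᵢ`. This description is metric, so `Δ` maps signed unit vectors to
signed unit vectors, in both directions. It also respects `eᵢ ↦ -eᵢ`, since `eᵢ` and `-eᵢ` have
no common sphere point at distance `1` while `±eⱼ` and `±eₗ` do for `j ≠ l`. Finally
`‖x - eᵢ‖ - ‖x + eᵢ‖ = -2xᵢ` for `x` on the sphere, so the coordinates of `Δ x` are read off from
its distances to `Δ(±eᵢ)`: `Δ` is a signed permutation of coordinates.
-/

open scoped lp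

theorem abs_sub_eq_abs_add_abs_iff {a b : ℝ} : |a - b| = |a| + |b| ↔ a * b ≤ 0 := by
  rw [sub_eq_add_neg, ← abs_neg b, abs_add_eq_add_abs_iff, mul_nonpos_iff]
  constructor <;> rintro (⟨h₁, h₂⟩ | ⟨h₁, h₂⟩)
  exacts [Or.inl ⟨h₁, by linarith⟩, Or.inr ⟨h₁, by linarith⟩, Or.inl ⟨h₁, by linarith⟩,
    Or.inr ⟨h₁, by linarith⟩]

theorem abs_sub_sub_abs_add_of_abs_le {c t : ℝ} (hc : |c| = 1) (ht : |t| ≤ 1) :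
    |t - c| - |t + c| = -2 * c * t := by
  rcases abs_le.1 ht with ⟨ht₁, ht₂⟩
  rcases (abs_eq zero_le_one).1 hc with rfl | rfl
  · rw [abs_of_nonpos (by linarith), abs_of_nonneg (by linarith)]; ring
  · rw [abs_of_nonneg (by linarith), abs_of_nonpos (by linarith)]; ring

section SphereIsometry

variable {E F : Type*} [NormedAddCommGroup E] [NormedAddCommGroup F]

structure IsSphereIsometry (Δ : E → F) : Prop where
  norm_map : ∀ x, ‖x‖ = 1 → ‖Δ x‖ = 1
  surj : ∀ y, ‖y‖ = 1 → ∃ x, ‖x‖ = 1 ∧ Δ x = y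
  dist_map : ∀ x y, ‖x‖ = 1 → ‖y‖ = 1 → ‖Δ x - Δ y‖ = ‖x - y‖

def antipodes (x : E) : Set E := {y | ‖y‖ = 1 ∧ ‖x - y‖ = 2}

def HasMaximalAntipodes (x : E) : Prop :=
  ∀ z, ‖z‖ = 1 → antipodes x ⊆ antipodes z → z = x

namespace IsSphereIsometry

variable {Δ : E → F}

theorem eq_of_map_eq (hΔ : IsSphereIsometry Δ) {x y : E} (hx : ‖x‖ = 1) (hy : ‖y‖ = 1)
    (h : Δ x = Δ y) : x = y := by
  have := hΔ.dist_map x y hx hy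
  rwa [h, sub_self, norm_zero, eq_comm, norm_sub_eq_zero_iff] at this

theorem map_mem_antipodes_iff (hΔ : IsSphereIsometry Δ) {x y : E} (hx : ‖x‖ = 1)
    (hy : ‖y‖ = 1) : Δ y ∈ antipodes (Δ x) ↔ y ∈ antipodes x := by
  simp only [antipodes, Set.mem_ofPred_eq, hΔ.norm_map y hy, hy, hΔ.dist_map x y hx hy]

theorem antipodes_map_subset_iff (hΔ : IsSphereIsometry Δ) {x z : E} (hx : ‖x‖ = 1)
    (hz : ‖z‖ = 1) : antipodes (Δ x) ⊆ antipodes (Δ z) ↔ antipodes x ⊆ antipodes z := by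
  constructor
  · intro h y hy
    exact (hΔ.map_mem_antipodes_iff hz hy.1).1 (h ((hΔ.map_mem_antipodes_iff hx hy.1).2 hy))
  · intro h w hw
    obtain ⟨y, hy, rfl⟩ := hΔ.surj w hw.1
    exact (hΔ.map_mem_antipodes_iff hz hy).2 (h ((hΔ.map_mem_antipodes_iff hx hy).1 hw))

theorem hasMaximalAntipodes_map_iff (hΔ : IsSphereIsometry Δ) {x : E} (hx : ‖x‖ = 1) :
    HasMaximalAntipodes (Δ x) ↔ HasMaximalAntipodes x := by
  constructor
  · intro h z hz hxz
    exact hΔ.eq_of_map_eq hz hx (h _ (hΔ.norm_map z hz) ((hΔ.antipodes_map_subset_iff hx hz).2 hxz))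
  · intro h w hw hxw
    obtain ⟨z, hz, rfl⟩ := hΔ.surj w hw
    rw [h z hz ((hΔ.antipodes_map_subset_iff hx hz).1 hxw)]

end IsSphereIsometry

end SphereIsometry

namespace lp

variable {Γ : Type*}

theorem norm_eq_tsum_abs (x : ℓ^1(Γ, ℝ)) : ‖x‖ = ∑' j, |x j| := by
  simpa using norm_eq_tsum_rpow (by norm_num) x

theorem summable_abs (x : ℓ^1(Γ, ℝ)) : Summable fun j => |x j| := by
  simpa using (lp.memℓp x).summable (by norm_num)

theorem memℓp_one_of_summable_abs {f : Γ → ℝ} (h : Summable fun j => |f j|) : Memℓp f 1 :=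
  memℓp_gen (by simpa using h)

variable [DecidableEq Γ]

theorem norm_sub_single (x : ℓ^1(Γ, ℝ)) (i : Γ) (c : ℝ) :
    ‖x - lp.single 1 i c‖ = ‖x‖ + (|x i - c| - |x i|) := by
  have hsplit (y : ℓ^1(Γ, ℝ)) : ‖y‖ = |y i| + ∑' j, if j = i then 0 else |y j| := by
    rw [norm_eq_tsum_abs, (summable_abs y).tsum_eq_add_tsum_ite i]
  have off_i : (fun j => if j = i then 0 else |(x - lp.single 1 i c : ℓ^1(Γ, ℝ)) j|) =
      fun j => if j = i then 0 else |x j| := by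
    funext j
    split_ifs with h
    · rfl
    · simp [h]
  rw [hsplit, hsplit x, off_i]
  simp only [coeFn_sub, Pi.sub_apply, lp.single_apply_self]
  ring

theorem eq_single_of_apply_eq_zero {x : ℓ^1(Γ, ℝ)} {i : Γ} (h : ∀ k, k ≠ i → x k = 0) :
    x = lp.single 1 i (x i) := by
  ext k
  by_cases hk : k = i
  · subst hk; simp
  · simp [hk, h k hk]

theorem norm_single_add_single {j l : Γ} (hjl : j ≠ l) (a b : ℝ) :
    ‖(lp.single 1 j a + lp.single 1 l b : ℓ^1(Γ, ℝ))‖ = |a| + |b| := by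
  have h := norm_sub_single (lp.single 1 j a : ℓ^1(Γ, ℝ)) l (-b)
  rw [lp.single_neg, sub_neg_eq_add] at h
  simp [h, hjl.symm]

theorem norm_sub_eq_add_iff (x y : ℓ^1(Γ, ℝ)) : ‖x - y‖ = ‖x‖ + ‖y‖ ↔ ∀ j, x j * y j ≤ 0 := by
  constructor
  · intro h j
    -- split off the `j`-th coordinate and apply the triangle inequality to the rest
    have hx := norm_sub_single x j (x j)
    have hy := norm_sub_single y j (y j)
    have hxy := norm_sub_single (x - y) j (x j - y j)
    have hrest : x - y - lp.single 1 j (x j - y j) =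
        (x - lp.single 1 j (x j)) - (y - lp.single 1 j (y j)) := by
      rw [lp.single_sub]; abel
    have tri := norm_sub_le (x - lp.single 1 j (x j)) (y - lp.single 1 j (y j))
    simp only [coeFn_sub, Pi.sub_apply, sub_self, abs_zero] at hx hy hxy
    rw [hrest] at hxy
    rw [← abs_sub_eq_abs_add_abs_iff]
    linarith [abs_sub (x j) (y j)]
  · intro h
    rw [norm_eq_tsum_abs, norm_eq_tsum_abs, norm_eq_tsum_abs,
      ← (summable_abs x).tsum_add (summable_abs y)]
    exact tsum_congr fun j => abs_sub_eq_abs_add_abs_iff.2 (h j)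

theorem mem_antipodes_iff {x y : ℓ^1(Γ, ℝ)} (hx : ‖x‖ = 1) :
    y ∈ antipodes x ↔ ‖y‖ = 1 ∧ ∀ j, x j * y j ≤ 0 := by
  refine and_congr_right fun hy => ?_
  rw [← norm_sub_eq_add_iff, hx, hy]
  norm_num

theorem mem_antipodes_single_iff {y : ℓ^1(Γ, ℝ)} {i : Γ} {θ : ℝ} (hθ : |θ| = 1) :
    y ∈ antipodes (lp.single 1 i θ) ↔ ‖y‖ = 1 ∧ θ * y i ≤ 0 := by
  rw [mem_antipodes_iff (by simpa using hθ)]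
  refine and_congr_right fun _ => ⟨fun h => by simpa using h i, fun h j => ?_⟩
  by_cases hj : j = i
  · subst hj; simpa using h
  · simp [hj]

theorem antipodes_subset_antipodes_single {x : ℓ^1(Γ, ℝ)} (hx : ‖x‖ = 1) {i : Γ} {θ : ℝ}
    (hθ : |θ| = 1) (hxθ : 0 < x i * θ) : antipodes x ⊆ antipodes (lp.single 1 i θ) := by
  intro y hy
  obtain ⟨hy, hxy⟩ := (mem_antipodes_iff hx).1 hy
  refine (mem_antipodes_single_iff hθ).2 ⟨hy, ?_⟩
  by_contra! hpos
  have hθθ : θ * θ = 1 := by rw [← abs_mul_abs_self, hθ, one_mul]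
  nlinarith [mul_pos hxθ hpos, hxy i]

theorem hasMaximalAntipodes_single {i : Γ} {θ : ℝ} (hθ : |θ| = 1) :
    HasMaximalAntipodes (lp.single 1 i θ : ℓ^1(Γ, ℝ)) := by
  intro z hz hsub
  have hsign (k : Γ) (s : ℝ) (hs : |s| = 1) (hks : θ * (Pi.single k s : Γ → ℝ) i ≤ 0) :
      z k * s ≤ 0 := by
    have hmem := hsub ((mem_antipodes_single_iff (y := lp.single 1 k s) hθ).2
      ⟨by simpa using hs, by simpa using hks⟩)
    simpa using ((mem_antipodes_iff hz).1 hmem).2 k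
  have off_i : ∀ k, k ≠ i → z k = 0 := fun k hk => by
    have h₁ := hsign k 1 abs_one (by simp [Ne.symm hk])
    have h₂ := hsign k (-1) (by simp) (by simp [Ne.symm hk])
    linarith
  have at_i : 0 ≤ z i * θ := by
    have := hsign i (-θ) (by rwa [abs_neg]) (by simpa using mul_self_nonneg θ)
    linarith
  rw [eq_single_of_apply_eq_zero off_i] at hz ⊢
  have hzi : |z i| = |θ| := by simpa [hθ] using hz
  rcases abs_eq_abs.1 hzi with h | h
  · rw [h]
  · rw [h, neg_mul, ← abs_mul_abs_self, hθ] at at_i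
    norm_num at at_i

theorem hasMaximalAntipodes_iff {x : ℓ^1(Γ, ℝ)} (hx : ‖x‖ = 1) :
    HasMaximalAntipodes x ↔ ∃ i θ, |θ| = 1 ∧ x = lp.single 1 i θ := by
  constructor
  · intro h
    obtain ⟨i, hi⟩ : ∃ i, x i ≠ 0 := by
      by_contra! h0
      have : x = 0 := lp.ext (funext h0)
      simp [this] at hx
    have hθ : |x i / (|x i|)| = 1 := by simp [abs_div, hi]
    refine ⟨i, x i / |x i|, hθ, (h _ (by simp [hi]) ?_).symm⟩
    refine antipodes_subset_antipodes_single hx hθ ?_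
    rw [← mul_div_assoc, ← abs_mul_abs_self, mul_self_div_self]
    exact abs_pos.2 hi
  · rintro ⟨i, θ, hθ, rfl⟩
    exact hasMaximalAntipodes_single hθ

theorem exists_sphere_midpoint_single_single {j l : Γ} (hjl : j ≠ l) {θ η : ℝ} (hθ : |θ| = 1)
    (hη : |η| = 1) : ∃ w : ℓ^1(Γ, ℝ),
      ‖w‖ = 1 ∧ ‖w - lp.single 1 j θ‖ = 1 ∧ ‖w - lp.single 1 l η‖ = 1 := by
  have hnorm (a b : ℝ) (ha : |a| = 1) (hb : |b| = 1) :
      ‖(lp.single 1 j (a / 2) + lp.single 1 l (b / 2) : ℓ^1(Γ, ℝ))‖ = 1 := by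
    rw [norm_single_add_single hjl, abs_div, abs_div, ha, hb]; norm_num
  refine ⟨_, hnorm θ η hθ hη, ?_, ?_⟩
  · rw [add_sub_right_comm, ← lp.single_sub, show θ / 2 - θ = -θ / 2 by ring]
    exact hnorm (-θ) η (by rwa [abs_neg]) hη
  · rw [add_sub_assoc, ← lp.single_sub, show η / 2 - η = -η / 2 by ring]
    exact hnorm θ (-η) hθ (by rwa [abs_neg])

theorem not_sphere_midpoint_single_neg {z : ℓ^1(Γ, ℝ)} (hz : ‖z‖ = 1) (i : Γ)
    (h₁ : ‖z - lp.single 1 i 1‖ = 1) (h₂ : ‖z - lp.single 1 i (-1)‖ = 1) : False := by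
  rw [norm_sub_single, hz] at h₁ h₂
  rw [sub_neg_eq_add] at h₂
  have hzi : z i = 0 := by
    have := (norm_apply_le_norm one_ne_zero z i).trans_eq hz
    linarith [abs_sub_sub_abs_add_of_abs_le abs_one this]
  norm_num [hzi] at h₁

theorem apply_eq_mul_of_norm_sub_single_eq {Γ' : Type*} [DecidableEq Γ'] {x : ℓ^1(Γ, ℝ)}
    {y : ℓ^1(Γ', ℝ)} (hx : ‖x‖ = 1) (hy : ‖y‖ = 1) {i : Γ} {j : Γ'} {η : ℝ}
    (hη : |η| = 1) (h₁ : ‖y - lp.single 1 j η‖ = ‖x - lp.single 1 i 1‖)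
    (h₂ : ‖y - lp.single 1 j (-η)‖ = ‖x - lp.single 1 i (-1)‖) : y j = η * x i := by
  rw [norm_sub_single, norm_sub_single, hx, hy] at h₁ h₂
  rw [sub_neg_eq_add, sub_neg_eq_add] at h₂
  have hyj := abs_sub_sub_abs_add_of_abs_le hη ((norm_apply_le_norm one_ne_zero y j).trans_eq hy)
  have hxi :=
    abs_sub_sub_abs_add_of_abs_le abs_one ((norm_apply_le_norm one_ne_zero x i).trans_eq hx)
  have hηη : η * η = 1 := by rw [← abs_mul_abs_self, hη, one_mul]
  have : η * y j = x i := by linarith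
  rw [← this, ← mul_assoc, hηη, one_mul]

end lp

namespace IsSphereIsometry

variable {Γ₁ Γ₂ : Type*} {Δ : ℓ^1(Γ₁, ℝ) → ℓ^1(Γ₂, ℝ)}

section
variable [DecidableEq Γ₁] [DecidableEq Γ₂]

theorem exists_map_single_eq_single (hΔ : IsSphereIsometry Δ) (i : Γ₁) {θ : ℝ} (hθ : |θ| = 1) :
    ∃ j η, |η| = 1 ∧ Δ (lp.single 1 i θ) = lp.single 1 j η := by
  have hx : ‖(lp.single 1 i θ : ℓ^1(Γ₁, ℝ))‖ = 1 := by simpa using hθ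
  exact (lp.hasMaximalAntipodes_iff (hΔ.norm_map _ hx)).1
    ((hΔ.hasMaximalAntipodes_map_iff hx).2 (lp.hasMaximalAntipodes_single hθ))

theorem exists_single_map_eq_single (hΔ : IsSphereIsometry Δ) (j : Γ₂) {η : ℝ} (hη : |η| = 1) :
    ∃ i θ, |θ| = 1 ∧ Δ (lp.single 1 i θ) = lp.single 1 j η := by
  obtain ⟨x, hx, hxj⟩ := hΔ.surj (lp.single 1 j η) (by simpa using hη)
  obtain ⟨i, θ, hθ, rfl⟩ := (lp.hasMaximalAntipodes_iff hx).1
    ((hΔ.hasMaximalAntipodes_map_iff hx).1 (hxj ▸ lp.hasMaximalAntipodes_single hη))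
  exact ⟨i, θ, hθ, hxj⟩

theorem map_single_neg_one (hΔ : IsSphereIsometry Δ) (i : Γ₁) :
    Δ (lp.single 1 i (-1)) = -Δ (lp.single 1 i 1) := by
  have hpos : ‖(lp.single 1 i 1 : ℓ^1(Γ₁, ℝ))‖ = 1 := by simp
  have hneg : ‖(lp.single 1 i (-1) : ℓ^1(Γ₁, ℝ))‖ = 1 := by simp
  obtain ⟨j, η, hη, hj⟩ := hΔ.exists_map_single_eq_single i abs_one
  obtain ⟨l, η', hη', hl⟩ := hΔ.exists_map_single_eq_single i (θ := -1) (by simp)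
  -- `e_i` and `-e_i` have no common point at distance `1` on the sphere, unlike `±e_j`, `±e_l`
  obtain rfl : j = l := by
    by_contra hjl
    obtain ⟨w, hw, hwj, hwl⟩ := lp.exists_sphere_midpoint_single_single hjl hη hη'
    obtain ⟨z, hz, rfl⟩ := hΔ.surj w hw
    rw [← hj, hΔ.dist_map z _ hz hpos] at hwj
    rw [← hl, hΔ.dist_map z _ hz hneg] at hwl
    exact lp.not_sphere_midpoint_single_neg hz i hwj hwl
  have hne : η' ≠ η := by
    rintro rfl
    have := congrArg (fun x : ℓ^1(Γ₁, ℝ) => x i) (hΔ.eq_of_map_eq hneg hpos (hl.trans hj.symm))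
    norm_num at this
  obtain rfl : η' = -η := by
    rcases abs_eq_abs.1 (hη'.trans hη.symm) with h | h
    exacts [absurd h hne, h]
  rw [hl, hj, lp.single_neg]

theorem map_apply_eq_mul (hΔ : IsSphereIsometry Δ) {i : Γ₁} {j : Γ₂} {η : ℝ}
    (hi : Δ (lp.single 1 i 1) = lp.single 1 j η) {x : ℓ^1(Γ₁, ℝ)} (hx : ‖x‖ = 1) :
    Δ x j = η * x i := by
  have hpos : ‖(lp.single 1 i 1 : ℓ^1(Γ₁, ℝ))‖ = 1 := by simp
  have hneg : ‖(lp.single 1 i (-1) : ℓ^1(Γ₁, ℝ))‖ = 1 := by simp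
  have hη : |η| = 1 := by simpa [hi] using hΔ.norm_map _ hpos
  refine lp.apply_eq_mul_of_norm_sub_single_eq hx (hΔ.norm_map x hx) hη ?_ ?_
  · rw [← hi, hΔ.dist_map x _ hx hpos]
  · rw [lp.single_neg, ← hi, ← hΔ.map_single_neg_one, hΔ.dist_map x _ hx hneg]

end

theorem exists_equiv_apply_eq_mul (hΔ : IsSphereIsometry Δ) :
    ∃ (σ : Γ₂ ≃ Γ₁) (θ : Γ₂ → ℝ), (∀ j, |θ j| = 1) ∧
      ∀ x : ℓ^1(Γ₁, ℝ), ‖x‖ = 1 → ∀ j, Δ x j = θ j * x (σ j) := by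
  classical
  choose τ η hη hτ using fun i => hΔ.exists_map_single_eq_single i abs_one
  have hΔτ (x : ℓ^1(Γ₁, ℝ)) (hx : ‖x‖ = 1) (i : Γ₁) : Δ x (τ i) = η i * x i :=
    hΔ.map_apply_eq_mul (hτ i) hx
  have hη0 (i : Γ₁) : η i ≠ 0 := abs_ne_zero.1 ((hη i).trans_ne one_ne_zero)
  have hinj : Function.Injective τ := by
    intro a b hab
    have := hΔτ (lp.single 1 a 1) (by simp) b
    rw [hτ a, ← hab] at this
    by_contra hne
    simp [Ne.symm hne, hη0 a] at this
  have hsurj : Function.Surjective τ := by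
    intro j
    obtain ⟨i, θ, hθ, hi⟩ := hΔ.exists_single_map_eq_single j abs_one
    have := hΔτ (lp.single 1 i θ) (by simpa using hθ) i
    refine ⟨i, by_contra fun hne => ?_⟩
    simp [hi, hne, hη0 i, abs_ne_zero.1 (hθ.trans_ne one_ne_zero)] at this
  let e := Equiv.ofBijective τ ⟨hinj, hsurj⟩
  refine ⟨e.symm, fun j => η (e.symm j), fun j => hη _, fun x hx j => ?_⟩
  rw [← hΔτ x hx, show τ (e.symm j) = j from e.apply_symm_apply j]

end IsSphereIsometry

namespace lp

variable {Γ₁ Γ₂ : Type*}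

noncomputable def signedPerm (σ : Γ₂ ≃ Γ₁) (θ : Γ₂ → ℝ) (hθ : ∀ j, |θ j| = 1) :
    ℓ^1(Γ₁, ℝ) →ₗᵢ[ℝ] ℓ^1(Γ₂, ℝ) where
  toFun x := ⟨fun j => θ j * x (σ j), memℓp_one_of_summable_abs <| by
    simpa [Function.comp_def, abs_mul, hθ] using σ.summable_iff.2 (summable_abs x)⟩
  map_add' x y := by ext j; exact mul_add _ _ _
  map_smul' c x := by ext j; simp [mul_left_comm]
  norm_map' x := by
    rw [norm_eq_tsum_abs, norm_eq_tsum_abs, ← σ.tsum_eq]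
    simp [abs_mul, hθ]

theorem signedPerm_apply (σ : Γ₂ ≃ Γ₁) (θ : Γ₂ → ℝ) (hθ : ∀ j, |θ j| = 1) (x : ℓ^1(Γ₁, ℝ))
    (j : Γ₂) : signedPerm σ θ hθ x j = θ j * x (σ j) := rfl

theorem signedPerm_surjective (σ : Γ₂ ≃ Γ₁) (θ : Γ₂ → ℝ) (hθ : ∀ j, |θ j| = 1) :
    Function.Surjective (signedPerm σ θ hθ) := by
  intro y
  refine ⟨signedPerm σ.symm (fun i => θ (σ.symm i)) (fun i => hθ _) y, ?_⟩
  ext j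
  rw [signedPerm_apply, signedPerm_apply, Equiv.symm_apply_apply, ← mul_assoc,
    ← abs_mul_abs_self, hθ, one_mul, one_mul]

end lp

/-- (Ding) Every surjective isometry between the unit spheres of two real `ℓ¹` spaces is a signed
permutation of the coordinates, and in particular extends to a surjective real-linear isometry
between the whole spaces. -/
theorem tingley_ell_one
    {Γ₁ Γ₂ : Type*}
    (Δ : lp (fun _ : Γ₁ => ℝ) 1 → lp (fun _ : Γ₂ => ℝ) 1)
    (hmap : ∀ x : lp (fun _ : Γ₁ => ℝ) 1, ‖x‖ = 1 → ‖Δ x‖ = 1)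
    (hsurj : ∀ y : lp (fun _ : Γ₂ => ℝ) 1, ‖y‖ = 1 →
      ∃ x : lp (fun _ : Γ₁ => ℝ) 1, ‖x‖ = 1 ∧ Δ x = y)
    (hiso : ∀ x y : lp (fun _ : Γ₁ => ℝ) 1, ‖x‖ = 1 → ‖y‖ = 1 → ‖Δ x - Δ y‖ = ‖x - y‖) :
    (∃ (σ : Γ₂ ≃ Γ₁) (θ : Γ₂ → ℝ), (∀ j : Γ₂, θ j = 1 ∨ θ j = -1) ∧
      ∀ x : lp (fun _ : Γ₁ => ℝ) 1, ‖x‖ = 1 →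
        ∀ j : Γ₂, (Δ x : ∀ _ : Γ₂, ℝ) j = θ j * (x : ∀ _ : Γ₁, ℝ) (σ j)) ∧
      ∃ T : lp (fun _ : Γ₁ => ℝ) 1 ≃ₗᵢ[ℝ] lp (fun _ : Γ₂ => ℝ) 1,
        ∀ x : lp (fun _ : Γ₁ => ℝ) 1, ‖x‖ = 1 → T x = Δ x := by
  obtain ⟨σ, θ, hθ, hΔ⟩ := IsSphereIsometry.exists_equiv_apply_eq_mul ⟨hmap, hsurj, hiso⟩
  refine ⟨⟨σ, θ, fun j => (abs_eq zero_le_one).1 (hθ j), hΔ⟩,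
    .ofSurjective _ (lp.signedPerm_surjective σ θ hθ), fun x hx => ?_⟩
  ext j
  exact (hΔ x hx j).symm
end

section
/- Let (Ω, Σ, μ) be a σ-finite measure space and let Y be a real Banach space. Then every surjective isometry Δ : S(L¹_ℝ(Ω, Σ, μ)) → S(Y) extends uniquely to a surjective real-linear isometry from L¹_ℝ(Ω, Σ, μ) onto Y. -/
/-!
Call unit vectors `x, w` of `L¹` *aligned* when `0 ≤ x * w` a.e.; in `L¹`,
`‖x - w‖ = ‖x‖ + ‖w‖` holds exactly when `x * w ≤ 0` a.e. First, aligned `x, w` satisfy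
`‖Δ x + Δ w‖ = 2`: the antipode of a point of the segment `[w, x]` close to `w` is opposite in
sign to `x`, hence at distance `2` from it. The test vectors are the normalized restrictions
`u|_E / ∫_E |u|` of a unit vector `u`, which are aligned with `u` and dominate it on `E`. Comparing
the preimage `z` of `-Δ u` with the preimage of `-Δ (u|_E / ∫_E |u|)` gives `∫_E |u| ≤ ∫_E |z|`
for every `E`, so `|z| = |u|`, and `z = -u` since `z * u ≤ 0`. Likewise, for aligned `x, w` the
preimage `b` of `t • Δ x + (1 - t) • Δ w` satisfies `‖b - y‖ ≤ t ‖x - y‖ + (1 - t) ‖w - y‖` for all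
unit `y`; testing with restrictions of `x` or `w` gives `∫_E |t x + (1 - t) w| ≤ ∫_E |b|`, and
`b` lies pointwise between `x` and `w`, so `b = t • x + (1 - t) • w`. Hence the radial extension
`f ↦ ‖f‖ • Δ (‖f‖⁻¹ • f)` is odd, positively homogeneous and additive on aligned pairs, so additive
by the splitting `f = f⁺ - f⁻`; it is the extension, unique since linear maps are determined by
their values on the sphere.
-/

open MeasureTheory

lemma abs_mul_add_mul_of_mul_nonneg {a b x y : ℝ} (ha : 0 ≤ a) (hb : 0 ≤ b) (hxy : 0 ≤ x * y) :
    |a * x + b * y| = a * |x| + b * |y| := by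
  rw [abs_add_eq_add_abs_iff (a * x) (b * y) |>.mpr, abs_mul, abs_mul, abs_of_nonneg ha,
    abs_of_nonneg hb]
  rcases mul_nonneg_iff.mp hxy with ⟨hx, hy⟩ | ⟨hx, hy⟩
  · exact Or.inl ⟨mul_nonneg ha hx, mul_nonneg hb hy⟩
  · exact Or.inr ⟨mul_nonpos_of_nonneg_of_nonpos ha hx, mul_nonpos_of_nonneg_of_nonpos hb hy⟩

lemma abs_sub_eq_abs_sub_abs_of_mul_nonneg {x y : ℝ} (hxy : 0 ≤ x * y) (h : |x| ≤ |y|) :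
    |x - y| = |y| - |x| := by
  rcases mul_nonneg_iff.mp hxy with ⟨hx, hy⟩ | ⟨hx, hy⟩
  · rw [abs_of_nonneg hx, abs_of_nonneg hy] at *
    rw [abs_of_nonpos (by linarith)]; ring
  · rw [abs_of_nonpos hx, abs_of_nonpos hy] at *
    rw [abs_of_nonneg (by linarith)]; ring

lemma eq_of_abs_sub_add_abs_sub_eq {x w b t : ℝ} (hxw : 0 ≤ x * w) (ht₀ : 0 ≤ t) (ht₁ : t ≤ 1)
    (hbet : |x - b| + |b - w| = |x - w|) (habs : |b| = |t * x + (1 - t) * w|) :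
    b = t * x + (1 - t) * w := by
  rcases mul_nonneg_iff.mp hxw with ⟨hx, hw⟩ | ⟨hx, hw⟩
  · have hb : 0 ≤ b := by
      by_contra hb
      rw [abs_of_pos (by linarith : 0 < x - b), abs_of_neg (by linarith : b - w < 0)] at hbet
      cases abs_cases (x - w) <;> linarith
    rwa [abs_of_nonneg hb, abs_of_nonneg (by positivity)] at habs
  · have hb : b ≤ 0 := by
      by_contra hb
      rw [abs_of_neg (by linarith : x - b < 0), abs_of_pos (by linarith : 0 < b - w)] at hbet
      cases abs_cases (x - w) <;> linarith
    rw [abs_of_nonpos hb, abs_of_nonpos (by nlinarith)] at habs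
    linarith

lemma mul_nonpos_of_mul_convex_nonpos {x w z s : ℝ} (hxw : 0 ≤ x * w) (hs₀ : 0 < s) (hs₁ : s ≤ 1)
    (h : z * (s * x + (1 - s) * w) ≤ 0) : x * z ≤ 0 := by
  by_contra! hxz
  have hx : 0 < x * x := mul_self_pos.mpr (left_ne_zero_of_mul hxz.ne')
  have hzw : 0 ≤ z * w :=
    (mul_nonneg_iff_of_pos_left hx).mp (by nlinarith [mul_nonneg hxz.le hxw])
  nlinarith

lemma map_add_of_map_add_of_nonneg {α β : Type*} [Lattice α] [AddCommGroup α]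
    [IsOrderedAddMonoid α] [AddCommGroup β] {T : α → β}
    (hnonneg : ∀ a b, 0 ≤ a → 0 ≤ b → T (a + b) = T a + T b)
    (hsplit : ∀ a, T a = T a⁺ - T a⁻) (a b : α) : T (a + b) = T a + T b := by
  have key : (a + b)⁺ + (a⁻ + b⁻) = (a + b)⁻ + (a⁺ + b⁺) := by
    rw [← sub_eq_zero]
    calc _ = ((a + b)⁺ - (a + b)⁻) - (a⁺ - a⁻) - (b⁺ - b⁻) := by abel
      _ = 0 := by rw [posPart_sub_negPart, posPart_sub_negPart, posPart_sub_negPart]; abel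
  have hT := congrArg T key
  rw [hnonneg _ _ (posPart_nonneg _) (add_nonneg (negPart_nonneg a) (negPart_nonneg b)),
    hnonneg _ _ (negPart_nonneg _) (add_nonneg (posPart_nonneg a) (posPart_nonneg b)),
    hnonneg _ _ (negPart_nonneg a) (negPart_nonneg b),
    hnonneg _ _ (posPart_nonneg a) (posPart_nonneg b)] at hT
  rw [hsplit (a + b), hsplit a, hsplit b, sub_eq_iff_eq_add]
  linear_combination (norm := abel) hT

section Normed

variable {F : Type*} [NormedAddCommGroup F] [NormedSpace ℝ F]

lemma norm_inv_norm_smul {f : F} (hf : f ≠ 0) : ‖‖f‖⁻¹ • f‖ = 1 := by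
  rw [norm_smul, norm_inv, norm_norm, inv_mul_cancel₀ (norm_ne_zero_iff.mpr hf)]

lemma norm_smul_add_one_sub_smul_eq_one {a b : F} (ha : ‖a‖ = 1) (hb : ‖b‖ = 1)
    (hab : ‖a + b‖ = 2) {t : ℝ} (ht₀ : 0 ≤ t) (ht₁ : t ≤ 1) :
    ‖t • a + (1 - t) • b‖ = 1 := by
  refine le_antisymm ?_ ?_
  · calc ‖t • a + (1 - t) • b‖ ≤ ‖t • a‖ + ‖(1 - t) • b‖ := norm_add_le _ _
      _ = 1 := by
        rw [norm_smul, norm_smul, ha, hb, Real.norm_of_nonneg ht₀,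
          Real.norm_of_nonneg (sub_nonneg.mpr ht₁)]
        ring
  -- the combination is `t • (a + b)` minus a short multiple of `b` (or symmetrically of `a`)
  rcases le_total (1 / 2) t with ht | ht
  · calc 1 = ‖t • (a + b)‖ - ‖(2 * t - 1) • b‖ := by
          rw [norm_smul, norm_smul, hab, hb, Real.norm_of_nonneg ht₀,
            Real.norm_of_nonneg (by linarith)]
          ring
      _ ≤ ‖t • (a + b) - (2 * t - 1) • b‖ := norm_sub_norm_le _ _
      _ = ‖t • a + (1 - t) • b‖ := by congr 1; module
  · calc 1 = ‖(1 - t) • (a + b)‖ - ‖(1 - 2 * t) • a‖ := by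
          rw [norm_smul, norm_smul, hab, ha, Real.norm_of_nonneg (by linarith),
            Real.norm_of_nonneg (by linarith)]
          ring
      _ ≤ ‖(1 - t) • (a + b) - (1 - 2 * t) • a‖ := norm_sub_norm_le _ _
      _ = ‖t • a + (1 - t) • b‖ := by congr 1; module

end Normed

section RadialExtension

variable {E F : Type*} [NormedAddCommGroup E] [NormedSpace ℝ E]
  [NormedAddCommGroup F] [NormedSpace ℝ F]

noncomputable def radialExtension (Δ : E → F) (f : E) : F := ‖f‖ • Δ (‖f‖⁻¹ • f)

variable {Δ : E → F}

lemma radialExtension_of_norm_eq_one {f : E} (hf : ‖f‖ = 1) : radialExtension Δ f = Δ f := by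
  simp [radialExtension, hf]

lemma norm_radialExtension (hmap : ∀ f : E, ‖f‖ = 1 → ‖Δ f‖ = 1) (f : E) :
    ‖radialExtension Δ f‖ = ‖f‖ := by
  rcases eq_or_ne f 0 with rfl | hf
  · simp [radialExtension]
  · rw [radialExtension, norm_smul, norm_norm, hmap _ (norm_inv_norm_smul hf), mul_one]

lemma radialExtension_smul_of_nonneg {c : ℝ} (hc : 0 ≤ c) (f : E) :
    radialExtension Δ (c • f) = c • radialExtension Δ f := by
  rcases hc.eq_or_lt with rfl | hc
  · simp [radialExtension]
  rcases eq_or_ne f 0 with rfl | hf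
  · simp [radialExtension]
  have hnorm : ‖c • f‖ = c * ‖f‖ := by rw [norm_smul, Real.norm_of_nonneg hc.le]
  have hunit : ‖c • f‖⁻¹ • c • f = ‖f‖⁻¹ • f := by
    rw [hnorm, smul_smul, mul_inv_rev, inv_mul_cancel_right₀ hc.ne']
  rw [radialExtension, radialExtension, hunit, hnorm, mul_smul]

lemma radialExtension_neg (hodd : ∀ u : E, ‖u‖ = 1 → Δ (-u) = -Δ u) (f : E) :
    radialExtension Δ (-f) = -radialExtension Δ f := by
  rcases eq_or_ne f 0 with rfl | hf
  · simp [radialExtension]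
  rw [radialExtension, radialExtension, norm_neg, smul_neg, hodd _ (norm_inv_norm_smul hf),
    smul_neg]

lemma radialExtension_smul (hodd : ∀ u : E, ‖u‖ = 1 → Δ (-u) = -Δ u) (c : ℝ) (f : E) :
    radialExtension Δ (c • f) = c • radialExtension Δ f := by
  rcases le_total 0 c with hc | hc
  · exact radialExtension_smul_of_nonneg hc f
  · have h := radialExtension_smul_of_nonneg (Δ := Δ) (neg_nonneg.mpr hc) f
    rwa [neg_smul, neg_smul, radialExtension_neg hodd, neg_inj] at h

lemma radialExtension_surjective (hsurj : ∀ y : F, ‖y‖ = 1 → ∃ f : E, ‖f‖ = 1 ∧ Δ f = y) :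
    Function.Surjective (radialExtension Δ) := by
  intro y
  rcases eq_or_ne y 0 with rfl | hy
  · exact ⟨0, by simp [radialExtension]⟩
  obtain ⟨u, hu, hΔu⟩ := hsurj _ (norm_inv_norm_smul hy)
  refine ⟨‖y‖ • u, ?_⟩
  rw [radialExtension_smul_of_nonneg (norm_nonneg y), radialExtension_of_norm_eq_one hu, hΔu,
    smul_inv_smul₀ (norm_ne_zero_iff.mpr hy)]

lemma exists_linearIsometryEquiv_of_radialExtension_add
    (hmap : ∀ f : E, ‖f‖ = 1 → ‖Δ f‖ = 1)
    (hsurj : ∀ y : F, ‖y‖ = 1 → ∃ f : E, ‖f‖ = 1 ∧ Δ f = y)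
    (hodd : ∀ u : E, ‖u‖ = 1 → Δ (-u) = -Δ u)
    (hadd : ∀ f g : E, radialExtension Δ (f + g) = radialExtension Δ f + radialExtension Δ g) :
    ∃ T : E ≃ₗᵢ[ℝ] F, ∀ f : E, ‖f‖ = 1 → T f = Δ f := by
  let T : E →ₗᵢ[ℝ] F :=
    { toFun := radialExtension Δ
      map_add' := hadd
      map_smul' := radialExtension_smul hodd
      norm_map' := norm_radialExtension hmap }
  exact ⟨.ofSurjective T (radialExtension_surjective hsurj),
    fun f hf => radialExtension_of_norm_eq_one hf⟩

lemma LinearIsometryEquiv.ext_of_norm_eq_one {T T' : E ≃ₗᵢ[ℝ] F}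
    (h : ∀ f : E, ‖f‖ = 1 → T f = T' f) : T = T' := by
  ext f
  rcases eq_or_ne f 0 with rfl | hf
  · simp
  · have h' := h _ (norm_inv_norm_smul hf)
    rw [map_smul, map_smul] at h'
    exact smul_right_injective F (inv_ne_zero (norm_ne_zero_iff.mpr hf)) h'

end RadialExtension

namespace MeasureTheory.L1

variable {Ω : Type*} [MeasurableSpace Ω] {μ : Measure Ω}

lemma coeFn_smul_add_smul (a b : ℝ) (f g : Lp ℝ 1 μ) :
    ∀ᵐ t ∂μ, (a • f + b • g) t = a * f t + b * g t := by
  filter_upwards [Lp.coeFn_add (a • f) (b • g), Lp.coeFn_smul a f, Lp.coeFn_smul b g]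
    with t h₁ h₂ h₃
  rw [h₁, Pi.add_apply, h₂, h₃]
  rfl

lemma integrable_abs (f : Lp ℝ 1 μ) : Integrable (fun t => |f t|) μ :=
  (integrable_coeFn f).abs

lemma norm_eq_integral_abs (f : Lp ℝ 1 μ) : ‖f‖ = ∫ t, |f t| ∂μ := by
  simp [norm_eq_integral_norm]

lemma norm_sub_eq_integral_abs_sub (f g : Lp ℝ 1 μ) : ‖f - g‖ = ∫ t, |f t - g t| ∂μ := by
  rw [norm_eq_integral_abs]
  refine integral_congr_ae ?_
  filter_upwards [Lp.coeFn_sub f g] with t ht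
  rw [ht, Pi.sub_apply]

lemma setIntegral_abs_add_compl (f : Lp ℝ 1 μ) {E : Set Ω} (hE : MeasurableSet E) :
    ∫ t in E, |f t| ∂μ + ∫ t in Eᶜ, |f t| ∂μ = ‖f‖ := by
  rw [norm_eq_integral_abs]
  exact integral_add_compl hE (integrable_abs f)

lemma norm_add_eq_add_norm_iff (f g : Lp ℝ 1 μ) :
    ‖f + g‖ = ‖f‖ + ‖g‖ ↔ ∀ᵐ t ∂μ, 0 ≤ f t * g t := by
  have hsum : ∀ᵐ t ∂μ, |(f + g) t| = |f t + g t| := by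
    filter_upwards [Lp.coeFn_add f g] with t ht
    rw [ht, Pi.add_apply]
  have hint : Integrable (fun t => |f t + g t|) μ :=
    ((integrable_coeFn f).add (integrable_coeFn g)).abs
  have hint' : Integrable (fun t => |f t| + |g t|) μ := (integrable_abs f).add (integrable_abs g)
  have hle : (fun t => |f t + g t|) ≤ᵐ[μ] fun t => |f t| + |g t| :=
    ae_of_all _ fun t => abs_add_le _ _
  have hadd := MeasureTheory.integral_add (integrable_abs f) (integrable_abs g)
  rw [norm_eq_integral_abs, norm_eq_integral_abs, norm_eq_integral_abs, integral_congr_ae hsum,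
    ← hadd, integral_eq_iff_of_ae_le hint hint' hle]
  refine Filter.eventually_congr (ae_of_all _ fun t => ?_)
  rw [abs_add_eq_add_abs_iff, mul_nonneg_iff]

lemma norm_sub_eq_add_norm_iff (f g : Lp ℝ 1 μ) :
    ‖f - g‖ = ‖f‖ + ‖g‖ ↔ ∀ᵐ t ∂μ, f t * g t ≤ 0 := by
  rw [sub_eq_add_neg, ← norm_neg g, norm_add_eq_add_norm_iff]
  refine Filter.eventually_congr ?_
  filter_upwards [Lp.coeFn_neg g] with t ht
  rw [ht, Pi.neg_apply, mul_neg, neg_nonneg]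

lemma norm_smul_add_smul_of_ae_mul_nonneg {a b : ℝ} (ha : 0 ≤ a) (hb : 0 ≤ b)
    {f g : Lp ℝ 1 μ} (hfg : ∀ᵐ t ∂μ, 0 ≤ f t * g t) :
    ‖a • f + b • g‖ = a * ‖f‖ + b * ‖g‖ := by
  rw [(norm_add_eq_add_norm_iff _ _).mpr, norm_smul, norm_smul, Real.norm_of_nonneg ha,
    Real.norm_of_nonneg hb]
  filter_upwards [Lp.coeFn_smul a f, Lp.coeFn_smul b g, hfg] with t hf hg ht
  rw [hf, hg, Pi.smul_apply, Pi.smul_apply, smul_eq_mul, smul_eq_mul,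
    mul_mul_mul_comm]
  exact mul_nonneg (mul_nonneg ha hb) ht

lemma setIntegral_abs_smul_add_smul {a b : ℝ} (ha : 0 ≤ a) (hb : 0 ≤ b)
    {f g : Lp ℝ 1 μ} (hfg : ∀ᵐ t ∂μ, 0 ≤ f t * g t) (E : Set Ω) :
    ∫ t in E, |(a • f + b • g) t| ∂μ = a * ∫ t in E, |f t| ∂μ + b * ∫ t in E, |g t| ∂μ := by
  have hadd := MeasureTheory.integral_add ((integrable_abs f).integrableOn (s := E).const_mul a)
    ((integrable_abs g).integrableOn (s := E).const_mul b)
  rw [← integral_const_mul, ← integral_const_mul, ← hadd]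
  refine integral_congr_ae (ae_restrict_of_ae ?_)
  filter_upwards [coeFn_smul_add_smul a b f g, hfg] with t ht hfgt
  rw [ht, abs_mul_add_mul_of_mul_nonneg ha hb hfgt]

lemma ae_abs_eq_of_forall_setIntegral_le {f g : Lp ℝ 1 μ} (hfg : ‖f‖ = ‖g‖)
    (h : ∀ E, MeasurableSet E → ∫ t in E, |f t| ∂μ ≤ ∫ t in E, |g t| ∂μ) :
    ∀ᵐ t ∂μ, |f t| = |g t| :=
  (integral_eq_iff_of_ae_le (integrable_abs f) (integrable_abs g)
    (ae_le_of_forall_setIntegral_le (integrable_abs f) (integrable_abs g) fun E hE _ => h E hE)).mp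
    (by rw [← norm_eq_integral_abs, ← norm_eq_integral_abs, hfg])

lemma ae_abs_sub_add_abs_sub_eq {x b w : Lp ℝ 1 μ} (h : ‖x - b‖ + ‖b - w‖ ≤ ‖x - w‖) :
    ∀ᵐ t ∂μ, |x t - b t| + |b t - w t| = |x t - w t| := by
  have hi : ∀ f g : Lp ℝ 1 μ, Integrable (fun t => |f t - g t|) μ :=
    fun f g => ((integrable_coeFn f).sub (integrable_coeFn g)).abs
  have hadd := MeasureTheory.integral_add (hi x b) (hi b w)
  refine ((integral_eq_iff_of_ae_le (g := fun t => |x t - b t| + |b t - w t|) (hi x w)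
    ((hi x b).add (hi b w)) (ae_of_all _ fun t => abs_sub_le _ _ _)).mp ?_).symm
  rw [hadd, ← norm_sub_eq_integral_abs_sub,
    ← norm_sub_eq_integral_abs_sub, ← norm_sub_eq_integral_abs_sub]
  exact le_antisymm (norm_sub_le_norm_sub_add_norm_sub x b w) h

lemma setIntegral_abs_eq_norm {y : Lp ℝ 1 μ} {E : Set Ω} (hE : MeasurableSet E)
    (hy : ∀ᵐ t ∂μ, t ∉ E → y t = 0) : ∫ t in E, |y t| ∂μ = ‖y‖ := by
  rw [← setIntegral_abs_add_compl y hE, left_eq_add]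
  refine (setIntegral_congr_ae hE.compl ?_).trans (MeasureTheory.integral_zero _ _)
  filter_upwards [hy] with t ht htE
  rw [ht htE, abs_zero]

lemma norm_sub_eq_setIntegral_add {f y : Lp ℝ 1 μ} {E : Set Ω} (hE : MeasurableSet E)
    (hf : ‖f‖ = 1) (hy : ∀ᵐ t ∂μ, t ∉ E → y t = 0) :
    ‖f - y‖ = ∫ t in E, |f t - y t| ∂μ + (1 - ∫ t in E, |f t| ∂μ) := by
  have hfE := setIntegral_abs_add_compl f hE
  have hint : Integrable (fun t => |f t - y t|) μ :=
    ((integrable_coeFn f).sub (integrable_coeFn y)).abs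
  rw [norm_sub_eq_integral_abs_sub, ← integral_add_compl hE hint, ← hf, ← hfE, add_sub_cancel_left]
  congr 1
  refine setIntegral_congr_ae hE.compl ?_
  filter_upwards [hy] with t ht htE
  rw [ht htE, sub_zero]

lemma two_sub_two_mul_setIntegral_le_norm_sub {f y : Lp ℝ 1 μ} {E : Set Ω}
    (hE : MeasurableSet E) (hf : ‖f‖ = 1) (hy : ‖y‖ = 1) (hyE : ∀ᵐ t ∂μ, t ∉ E → y t = 0) :
    2 - 2 * ∫ t in E, |f t| ∂μ ≤ ‖f - y‖ := by
  have hmono : ∫ t in E, (|y t| - |f t|) ∂μ ≤ ∫ t in E, |f t - y t| ∂μ :=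
    setIntegral_mono ((integrable_abs y).sub (integrable_abs f)).integrableOn
      ((integrable_coeFn f).sub (integrable_coeFn y)).abs.integrableOn
      fun t => (abs_sub_abs_le_abs_sub _ _).trans_eq (abs_sub_comm _ _)
  rw [MeasureTheory.integral_sub (integrable_abs y).integrableOn (integrable_abs f).integrableOn,
    setIntegral_abs_eq_norm hE hyE, hy] at hmono
  rw [norm_sub_eq_setIntegral_add hE hf hyE]
  linarith

lemma norm_sub_eq_two_sub_two_mul_setIntegral {f y : Lp ℝ 1 μ} {E : Set Ω}
    (hE : MeasurableSet E) (hf : ‖f‖ = 1) (hy : ‖y‖ = 1) (hyE : ∀ᵐ t ∂μ, t ∉ E → y t = 0)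
    (hfy : ∀ᵐ t ∂μ, t ∈ E → 0 ≤ f t * y t ∧ |f t| ≤ |y t|) :
    ‖f - y‖ = 2 - 2 * ∫ t in E, |f t| ∂μ := by
  have hE' : ∫ t in E, |f t - y t| ∂μ = ∫ t in E, (|y t| - |f t|) ∂μ := by
    refine setIntegral_congr_ae hE ?_
    filter_upwards [hfy] with t ht htE
    exact abs_sub_eq_abs_sub_abs_of_mul_nonneg (ht htE).1 (ht htE).2
  rw [norm_sub_eq_setIntegral_add hE hf hyE, hE',
    MeasureTheory.integral_sub (integrable_abs y).integrableOn (integrable_abs f).integrableOn,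
    setIntegral_abs_eq_norm hE hyE, hy]
  ring

lemma exists_norm_eq_one_eqOn_inv_smul (f : Lp ℝ 1 μ) {E : Set Ω} (hE : MeasurableSet E)
    (hfE : ∫ t in E, |f t| ∂μ ≠ 0) :
    ∃ y : Lp ℝ 1 μ, ‖y‖ = 1 ∧ (∀ᵐ t ∂μ, t ∉ E → y t = 0) ∧
      ∀ᵐ t ∂μ, t ∈ E → y t = (∫ s in E, |f s| ∂μ)⁻¹ * f t := by
  have hc : 0 < ∫ s in E, |f s| ∂μ :=
    (setIntegral_nonneg hE fun t _ => abs_nonneg (f t)).lt_of_ne' hfE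
  have hind := (integrable_coeFn f).indicator hE
  have hy := Lp.coeFn_smul (∫ s in E, |f s| ∂μ)⁻¹ (hind.toL1 _)
  refine ⟨(∫ s in E, |f s| ∂μ)⁻¹ • hind.toL1 _, ?_, ?_, ?_⟩
  · rw [norm_smul, Real.norm_of_nonneg (inv_nonneg.mpr hc.le), inv_mul_eq_one₀ hc.ne',
      norm_eq_integral_abs, ← integral_indicator hE]
    refine integral_congr_ae ?_
    filter_upwards [Integrable.coeFn_toL1 hind] with t ht
    rw [ht, ← Real.norm_eq_abs, norm_indicator_eq_indicator_norm]
    rfl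
  · filter_upwards [hy, Integrable.coeFn_toL1 hind] with t h₁ h₂ htE
    rw [h₁, Pi.smul_apply, h₂, Set.indicator_of_notMem htE, smul_zero]
  · filter_upwards [hy, Integrable.coeFn_toL1 hind] with t h₁ h₂ htE
    rw [h₁, Pi.smul_apply, h₂, Set.indicator_of_mem htE, smul_eq_mul]

lemma norm_sub_eq_of_eqOn_inv_smul {f g y : Lp ℝ 1 μ} {E : Set Ω} (hE : MeasurableSet E)
    (hf : ‖f‖ = 1) (hfE : ∫ t in E, |f t| ∂μ ≠ 0) (hy : ‖y‖ = 1)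
    (hyE : ∀ᵐ t ∂μ, t ∉ E → y t = 0) (hyf : ∀ᵐ t ∂μ, t ∈ E → y t = (∫ s in E, |f s| ∂μ)⁻¹ * f t)
    (hg : ‖g‖ = 1) (hfg : ∀ᵐ t ∂μ, 0 ≤ f t * g t) (hgf : ∀ᵐ t ∂μ, t ∈ E → |g t| ≤ |f t|) :
    ‖g - y‖ = 2 - 2 * ∫ t in E, |g t| ∂μ := by
  set c := ∫ s in E, |f s| ∂μ
  have hc : 0 < c := (setIntegral_nonneg hE fun t _ => abs_nonneg (f t)).lt_of_ne' hfE
  have hc₁ : c ≤ 1 := hf ▸ norm_eq_integral_abs f ▸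
    setIntegral_le_integral (integrable_abs f) (ae_of_all _ fun t => abs_nonneg (f t))
  have hc₁' : 1 ≤ c⁻¹ := one_le_inv₀ hc |>.mpr hc₁
  refine norm_sub_eq_two_sub_two_mul_setIntegral hE hg hy hyE ?_
  filter_upwards [hyf, hfg, hgf] with t ht hfgt hgft htE
  rw [ht htE, abs_mul, abs_of_pos (inv_pos.mpr hc)]
  constructor
  · rw [mul_left_comm]
    exact mul_nonneg (inv_nonneg.mpr hc.le) (mul_comm (g t) (f t) ▸ hfgt)
  · nlinarith [hgft htE, abs_nonneg (f t)]

lemma setIntegral_abs_le_of_norm_sub_le {x w b : Lp ℝ 1 μ} (hx : ‖x‖ = 1) (hw : ‖w‖ = 1)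
    (hb : ‖b‖ = 1) (hxw : ∀ᵐ s ∂μ, 0 ≤ x s * w s) {t : ℝ} (ht₀ : 0 ≤ t) (ht₁ : t ≤ 1)
    (hdom : ∀ y : Lp ℝ 1 μ, ‖y‖ = 1 → ‖b - y‖ ≤ t * ‖x - y‖ + (1 - t) * ‖w - y‖)
    {E : Set Ω} (hE : MeasurableSet E) (hwx : ∀ᵐ s ∂μ, s ∈ E → |w s| ≤ |x s|) :
    ∫ s in E, |(t • x + (1 - t) • w) s| ∂μ ≤ ∫ s in E, |b s| ∂μ := by
  rw [setIntegral_abs_smul_add_smul ht₀ (sub_nonneg.mpr ht₁) hxw]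
  have hwE : ∫ s in E, |w s| ∂μ ≤ ∫ s in E, |x s| ∂μ :=
    setIntegral_mono_on_ae (integrable_abs w).integrableOn (integrable_abs x).integrableOn hE hwx
  have hbE : 0 ≤ ∫ s in E, |b s| ∂μ := setIntegral_nonneg hE fun s _ => abs_nonneg (b s)
  rcases eq_or_ne (∫ s in E, |x s| ∂μ) 0 with hxE | hxE
  · have hwE₀ : ∫ s in E, |w s| ∂μ = 0 :=
      le_antisymm (hxE ▸ hwE) (setIntegral_nonneg hE fun s _ => abs_nonneg (w s))
    rw [hxE, hwE₀]
    simpa using hbE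
  -- the normalized restriction of `x` to `E` dominates both `x` and `w` on `E`
  obtain ⟨y, hy, hyE, hyx⟩ := exists_norm_eq_one_eqOn_inv_smul x hE hxE
  have hxy := norm_sub_eq_of_eqOn_inv_smul hE hx hxE hy hyE hyx hx
    (ae_of_all _ fun s => mul_self_nonneg (x s)) (ae_of_all _ fun s _ => le_rfl)
  have hwy := norm_sub_eq_of_eqOn_inv_smul hE hx hxE hy hyE hyx hw hxw hwx
  have hby := two_sub_two_mul_setIntegral_le_norm_sub hE hb hy hyE
  have := hdom y hy
  rw [hxy, hwy] at this
  linarith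

lemma eq_smul_add_one_sub_smul_of_norm_sub_le {x w b : Lp ℝ 1 μ} (hx : ‖x‖ = 1)
    (hw : ‖w‖ = 1) (hb : ‖b‖ = 1) (hxw : ∀ᵐ s ∂μ, 0 ≤ x s * w s) {t : ℝ} (ht₀ : 0 ≤ t)
    (ht₁ : t ≤ 1)
    (hdom : ∀ y : Lp ℝ 1 μ, ‖y‖ = 1 → ‖b - y‖ ≤ t * ‖x - y‖ + (1 - t) * ‖w - y‖) :
    b = t • x + (1 - t) • w := by
  have hmass : ∀ E, MeasurableSet E →
      ∫ s in E, |(t • x + (1 - t) • w) s| ∂μ ≤ ∫ s in E, |b s| ∂μ := by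
    intro E hE
    have hS : MeasurableSet {s | |w s| ≤ |x s|} :=
      measurableSet_le (Lp.stronglyMeasurable w).measurable.abs
        (Lp.stronglyMeasurable x).measurable.abs
    have h₁ := setIntegral_abs_le_of_norm_sub_le hx hw hb hxw ht₀ ht₁ hdom (hE.inter hS)
      (ae_of_all _ fun s hs => hs.2)
    have h₂ := setIntegral_abs_le_of_norm_sub_le hw hx hb (by simpa only [mul_comm] using hxw)
      (sub_nonneg.mpr ht₁) (sub_le_self 1 ht₀) (fun y hy => by linarith [hdom y hy]) (hE.diff hS)
      (ae_of_all _ fun s hs => le_of_not_ge hs.2)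
    rw [sub_sub_cancel, add_comm] at h₂
    rw [← integral_inter_add_sdiff hS (integrable_abs _).integrableOn,
      ← integral_inter_add_sdiff hS (integrable_abs b).integrableOn]
    exact add_le_add h₁ h₂
  have hv : ‖t • x + (1 - t) • w‖ = 1 := by
    rw [norm_smul_add_smul_of_ae_mul_nonneg ht₀ (sub_nonneg.mpr ht₁) hxw, hx, hw]
    ring
  have habs := ae_abs_eq_of_forall_setIntegral_le (hv.trans hb.symm) hmass
  have hbet : ∀ᵐ s ∂μ, |x s - b s| + |b s - w s| = |x s - w s| := by
    refine ae_abs_sub_add_abs_sub_eq ?_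
    have hbx := hdom x hx
    have hbw := hdom w hw
    rw [sub_self, norm_zero, norm_sub_rev w x] at hbx
    rw [sub_self, norm_zero] at hbw
    rw [norm_sub_rev x b]
    linarith
  refine Lp.ext ?_
  filter_upwards [habs, hbet, hxw, coeFn_smul_add_smul t (1 - t) x w] with s h₁ h₂ h₃ h₄
  rw [h₄] at h₁ ⊢
  exact eq_of_abs_sub_add_abs_sub_eq h₃ ht₀ ht₁ h₂ h₁.symm

end MeasureTheory.L1

structure IsSurjectiveSphereIsometry {E F : Type*} [NormedAddCommGroup E] [NormedAddCommGroup F]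
    (Δ : E → F) : Prop where
  norm_map : ∀ f, ‖f‖ = 1 → ‖Δ f‖ = 1
  exists_map_eq : ∀ y, ‖y‖ = 1 → ∃ f, ‖f‖ = 1 ∧ Δ f = y
  norm_map_sub_map : ∀ f g, ‖f‖ = 1 → ‖g‖ = 1 → ‖Δ f - Δ g‖ = ‖f - g‖

namespace IsSurjectiveSphereIsometry

section General

variable {E F : Type*} [NormedAddCommGroup E] [NormedAddCommGroup F] {Δ : E → F}

lemma exists_map_eq_neg (hΔ : IsSurjectiveSphereIsometry Δ) {u : E} (hu : ‖u‖ = 1) :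
    ∃ z, ‖z‖ = 1 ∧ Δ z = -Δ u :=
  hΔ.exists_map_eq _ (by rw [norm_neg, hΔ.norm_map u hu])

lemma norm_sub_eq_two_of_map_eq_neg [NormedSpace ℝ F] (hΔ : IsSurjectiveSphereIsometry Δ) {u z : E}
    (hu : ‖u‖ = 1) (hz : ‖z‖ = 1) (hzu : Δ z = -Δ u) : ‖z - u‖ = 2 := by
  rw [← hΔ.norm_map_sub_map z u hz hu, hzu, ← neg_add', norm_neg, ← two_smul ℝ, norm_smul,
    hΔ.norm_map u hu, Real.norm_two, mul_one]

end General

variable {Ω : Type*} [MeasurableSpace Ω] {μ : Measure Ω}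
  {Y : Type*} [NormedAddCommGroup Y] [NormedSpace ℝ Y] {Δ : Lp ℝ 1 μ → Y}

lemma ae_mul_nonpos_of_map_eq_neg (hΔ : IsSurjectiveSphereIsometry Δ) {u z : Lp ℝ 1 μ}
    (hu : ‖u‖ = 1) (hz : ‖z‖ = 1) (hzu : Δ z = -Δ u) : ∀ᵐ t ∂μ, z t * u t ≤ 0 :=
  (L1.norm_sub_eq_add_norm_iff z u).mp <| by
    rw [hΔ.norm_sub_eq_two_of_map_eq_neg hu hz hzu, hz, hu, one_add_one_eq_two]

lemma norm_map_add_map_eq_two (hΔ : IsSurjectiveSphereIsometry Δ) {x w : Lp ℝ 1 μ}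
    (hx : ‖x‖ = 1) (hw : ‖w‖ = 1) (hxw : ∀ᵐ t ∂μ, 0 ≤ x t * w t) : ‖Δ x + Δ w‖ = 2 := by
  have hle : ‖Δ x + Δ w‖ ≤ 2 :=
    (norm_add_le _ _).trans (by rw [hΔ.norm_map x hx, hΔ.norm_map w hw, one_add_one_eq_two])
  -- the antipode of a point `m` of the segment `[w, x]` near `w` is opposite in sign to `x`
  have hge : ∀ s : ℝ, 0 < s → s ≤ 1 → 2 - 2 * s ≤ ‖Δ x + Δ w‖ := by
    intro s hs₀ hs₁
    set m := s • x + (1 - s) • w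
    have hm : ‖m‖ = 1 := by
      rw [L1.norm_smul_add_smul_of_ae_mul_nonneg hs₀.le (sub_nonneg.mpr hs₁) hxw, hx, hw]
      ring
    obtain ⟨z, hz, hzm⟩ := hΔ.exists_map_eq_neg hm
    have hxz : ∀ᵐ t ∂μ, x t * z t ≤ 0 := by
      filter_upwards [hΔ.ae_mul_nonpos_of_map_eq_neg hm hz hzm,
        L1.coeFn_smul_add_smul s (1 - s) x w, hxw] with t hzmt hmt hxwt
      rw [hmt] at hzmt
      exact mul_nonpos_of_mul_convex_nonpos hxwt hs₀ hs₁ hzmt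
    have hxm : ‖Δ x + Δ m‖ = 2 := by
      rw [← sub_neg_eq_add, ← hzm, hΔ.norm_map_sub_map x z hx hz,
        (L1.norm_sub_eq_add_norm_iff x z).mpr hxz, hx, hz, one_add_one_eq_two]
    have hmw : ‖Δ m - Δ w‖ ≤ 2 * s := by
      rw [hΔ.norm_map_sub_map m w hm hw, show m - w = s • (x - w) by module, norm_smul,
        Real.norm_of_nonneg hs₀.le]
      have := norm_sub_le x w
      rw [hx, hw] at this
      nlinarith
    calc 2 - 2 * s ≤ ‖Δ x + Δ m‖ - ‖Δ m - Δ w‖ := by linarith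
      _ ≤ ‖(Δ x + Δ m) - (Δ m - Δ w)‖ := norm_sub_norm_le _ _
      _ = ‖Δ x + Δ w‖ := by congr 1; abel
  refine le_antisymm hle (le_of_forall_pos_lt_add fun ε hε => ?_)
  have := hge (min (ε / 4) 1) (lt_min (by positivity) one_pos) (min_le_right _ _)
  linarith [min_le_left (ε / 4) 1]

lemma ae_mul_nonpos_of_map_eq_neg_of_ae_mul_nonneg (hΔ : IsSurjectiveSphereIsometry Δ)
    {u v z : Lp ℝ 1 μ} (hu : ‖u‖ = 1) (hv : ‖v‖ = 1) (hz : ‖z‖ = 1) (hzu : Δ z = -Δ u)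
    (huv : ∀ᵐ t ∂μ, 0 ≤ u t * v t) : ∀ᵐ t ∂μ, z t * v t ≤ 0 :=
  (L1.norm_sub_eq_add_norm_iff z v).mp <| by
    rw [← hΔ.norm_map_sub_map z v hz hv, hzu, ← neg_add', norm_neg,
      hΔ.norm_map_add_map_eq_two hu hv huv, hz, hv, one_add_one_eq_two]

lemma ae_eq_zero_of_map_eq_neg (hΔ : IsSurjectiveSphereIsometry Δ) {u z : Lp ℝ 1 μ}
    (hu : ‖u‖ = 1) (hz : ‖z‖ = 1) (hzu : Δ z = -Δ u) {A : Set Ω} (hA : MeasurableSet A)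
    (huA : ∀ᵐ t ∂μ, t ∈ A → u t = 0) : ∀ᵐ t ∂μ, t ∈ A → z t = 0 := by
  rcases eq_or_ne (∫ t in A, |z t| ∂μ) 0 with hzA | hzA
  · have h := (setIntegral_eq_zero_iff_of_nonneg_ae (ae_of_all _ fun t => abs_nonneg (z t))
      (L1.integrable_abs z).integrableOn).mp hzA
    rw [Filter.EventuallyEq, ae_restrict_iff' hA] at h
    filter_upwards [h] with t ht htA
    exact abs_eq_zero.mp (ht htA)
  -- otherwise test against the normalized restriction `y` of `z` to `A`, which is disjoint from `u`
  obtain ⟨y, hy, hyA, hyz⟩ := L1.exists_norm_eq_one_eqOn_inv_smul z hA hzA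
  have huy : ∀ᵐ t ∂μ, 0 ≤ u t * y t := by
    filter_upwards [huA, hyA] with t hut hyt
    by_cases htA : t ∈ A
    · rw [hut htA, zero_mul]
    · rw [hyt htA, mul_zero]
  have hc : 0 < (∫ t in A, |z t| ∂μ)⁻¹ :=
    inv_pos.mpr ((setIntegral_nonneg hA fun t _ => abs_nonneg (z t)).lt_of_ne' hzA)
  filter_upwards [hΔ.ae_mul_nonpos_of_map_eq_neg_of_ae_mul_nonneg hu hy hz hzu huy, hyz]
    with t hzyt hyzt htA
  rw [hyzt htA, mul_left_comm] at hzyt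
  exact mul_self_eq_zero.mp (le_antisymm (by nlinarith) (mul_self_nonneg _))

lemma setIntegral_abs_le_of_map_eq_neg (hΔ : IsSurjectiveSphereIsometry Δ) {u z : Lp ℝ 1 μ}
    (hu : ‖u‖ = 1) (hz : ‖z‖ = 1) (hzu : Δ z = -Δ u) {B : Set Ω} (hB : MeasurableSet B) :
    ∫ t in B, |u t| ∂μ ≤ ∫ t in B, |z t| ∂μ := by
  rcases eq_or_ne (∫ t in B, |u t| ∂μ) 0 with huB | huB
  · rw [huB]
    exact setIntegral_nonneg hB fun t _ => abs_nonneg (z t)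
  -- compare `z` with the antipode `zB` of the normalized restriction `uB` of `u` to `B`
  obtain ⟨uB, huB₁, huBB, huBu⟩ := L1.exists_norm_eq_one_eqOn_inv_smul u hB huB
  obtain ⟨zB, hzB₁, hzBu⟩ := hΔ.exists_map_eq_neg huB₁
  have hzBB : ∀ᵐ t ∂μ, t ∉ B → zB t = 0 :=
    hΔ.ae_eq_zero_of_map_eq_neg huB₁ hzB₁ hzBu hB.compl huBB
  have hdist : ‖z - zB‖ = ‖u - uB‖ := by
    rw [← hΔ.norm_map_sub_map z zB hz hzB₁, hzu, hzBu, neg_sub_neg, norm_sub_rev,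
      hΔ.norm_map_sub_map u uB hu huB₁]
  have hu_uB := L1.norm_sub_eq_of_eqOn_inv_smul hB hu huB huB₁ huBB huBu hu
    (ae_of_all _ fun t => mul_self_nonneg (u t)) (ae_of_all _ fun t _ => le_rfl)
  have hz_zB := L1.two_sub_two_mul_setIntegral_le_norm_sub hB hz hzB₁ hzBB
  linarith

lemma map_neg (hΔ : IsSurjectiveSphereIsometry Δ) {u : Lp ℝ 1 μ} (hu : ‖u‖ = 1) :
    Δ (-u) = -Δ u := by
  obtain ⟨z, hz, hzu⟩ := hΔ.exists_map_eq_neg hu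
  suffices z = -u by rw [← this, hzu]
  have habs := L1.ae_abs_eq_of_forall_setIntegral_le (hu.trans hz.symm)
    fun B hB => hΔ.setIntegral_abs_le_of_map_eq_neg hu hz hzu hB
  refine Lp.ext ?_
  filter_upwards [habs, hΔ.ae_mul_nonpos_of_map_eq_neg hu hz hzu, Lp.coeFn_neg u]
    with t habst hzut hnegt
  rw [hnegt, Pi.neg_apply]
  rcases abs_eq_abs.mp habst with h | h
  · rw [← h] at hzut ⊢
    rw [mul_self_eq_zero.mp (le_antisymm hzut (mul_self_nonneg _)), neg_zero]
  · rw [h, neg_neg]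

lemma map_smul_add_one_sub_smul (hΔ : IsSurjectiveSphereIsometry Δ) {x w : Lp ℝ 1 μ}
    (hx : ‖x‖ = 1) (hw : ‖w‖ = 1) (hxw : ∀ᵐ t ∂μ, 0 ≤ x t * w t) {t : ℝ} (ht₀ : 0 ≤ t)
    (ht₁ : t ≤ 1) : Δ (t • x + (1 - t) • w) = t • Δ x + (1 - t) • Δ w := by
  obtain ⟨b, hb, hbΔ⟩ := hΔ.exists_map_eq _ <| norm_smul_add_one_sub_smul_eq_one
    (hΔ.norm_map x hx) (hΔ.norm_map w hw) (hΔ.norm_map_add_map_eq_two hx hw hxw) ht₀ ht₁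
  rw [← hbΔ, ← L1.eq_smul_add_one_sub_smul_of_norm_sub_le hx hw hb hxw ht₀ ht₁]
  intro y hy
  rw [← hΔ.norm_map_sub_map b y hb hy, hbΔ, ← hΔ.norm_map_sub_map x y hx hy,
    ← hΔ.norm_map_sub_map w y hw hy]
  calc ‖t • Δ x + (1 - t) • Δ w - Δ y‖ = ‖t • (Δ x - Δ y) + (1 - t) • (Δ w - Δ y)‖ := by
        congr 1; module
    _ ≤ ‖t • (Δ x - Δ y)‖ + ‖(1 - t) • (Δ w - Δ y)‖ := norm_add_le _ _
    _ = t * ‖Δ x - Δ y‖ + (1 - t) * ‖Δ w - Δ y‖ := by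
        rw [norm_smul, norm_smul, Real.norm_of_nonneg ht₀, Real.norm_of_nonneg (sub_nonneg.mpr ht₁)]

lemma radialExtension_add_of_ae_mul_nonneg (hΔ : IsSurjectiveSphereIsometry Δ)
    {f g : Lp ℝ 1 μ} (hfg : ∀ᵐ t ∂μ, 0 ≤ f t * g t) :
    radialExtension Δ (f + g) = radialExtension Δ f + radialExtension Δ g := by
  rcases eq_or_ne f 0 with rfl | hf
  · simp [radialExtension]
  rcases eq_or_ne g 0 with rfl | hg
  · simp [radialExtension]
  have ha : 0 < ‖f‖ := norm_pos_iff.mpr hf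
  have hb : 0 < ‖g‖ := norm_pos_iff.mpr hg
  have hxw : ∀ᵐ t ∂μ, 0 ≤ (‖f‖⁻¹ • f) t * (‖g‖⁻¹ • g) t := by
    filter_upwards [Lp.coeFn_smul ‖f‖⁻¹ f, Lp.coeFn_smul ‖g‖⁻¹ g, hfg] with t hft hgt hfgt
    rw [hft, hgt, Pi.smul_apply, Pi.smul_apply, smul_eq_mul, smul_eq_mul, mul_mul_mul_comm]
    exact mul_nonneg (by positivity) hfgt
  set t := ‖f‖ / (‖f‖ + ‖g‖) with ht
  have ht₀ : 0 ≤ t := by positivity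
  have ht₁ : t ≤ 1 := div_le_one_of_le₀ (le_add_of_nonneg_right hb.le) (by positivity)
  have hft : (‖f‖ + ‖g‖) * t = ‖f‖ := by rw [ht]; field_simp
  have hgt : (‖f‖ + ‖g‖) * (1 - t) = ‖g‖ := by rw [ht]; field_simp; ring
  have hsum : f + g = (‖f‖ + ‖g‖) • (t • (‖f‖⁻¹ • f) + (1 - t) • (‖g‖⁻¹ • g)) := by
    simp only [smul_add, smul_smul, ← mul_assoc, hft, hgt, mul_inv_cancel₀ ha.ne',
      mul_inv_cancel₀ hb.ne', one_smul]
  have hunit : ‖t • (‖f‖⁻¹ • f) + (1 - t) • (‖g‖⁻¹ • g)‖ = 1 := by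
    rw [L1.norm_smul_add_smul_of_ae_mul_nonneg ht₀ (sub_nonneg.mpr ht₁) hxw,
      norm_inv_norm_smul hf, norm_inv_norm_smul hg]
    ring
  rw [hsum, radialExtension_smul_of_nonneg (by positivity), radialExtension_of_norm_eq_one hunit,
    hΔ.map_smul_add_one_sub_smul (norm_inv_norm_smul hf) (norm_inv_norm_smul hg) hxw ht₀ ht₁,
    smul_add, smul_smul, smul_smul, hft, hgt, radialExtension, radialExtension]

lemma radialExtension_add (hΔ : IsSurjectiveSphereIsometry Δ) (f g : Lp ℝ 1 μ) :
    radialExtension Δ (f + g) = radialExtension Δ f + radialExtension Δ g := by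
  refine map_add_of_map_add_of_nonneg (fun a b ha hb => ?_) (fun a => ?_) f g
  · refine hΔ.radialExtension_add_of_ae_mul_nonneg ?_
    filter_upwards [(Lp.coeFn_nonneg a).mpr ha, (Lp.coeFn_nonneg b).mpr hb] with t hat hbt
    exact mul_nonneg hat hbt
  · conv_lhs => rw [← posPart_sub_negPart a]
    rw [sub_eq_add_neg, hΔ.radialExtension_add_of_ae_mul_nonneg, radialExtension_neg
      (fun u hu => hΔ.map_neg hu), ← sub_eq_add_neg]
    filter_upwards [Lp.coeFn_sup a 0, Lp.coeFn_sup (-a) 0, Lp.coeFn_neg a, Lp.coeFn_neg a⁻,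
      Lp.coeFn_zero ℝ 1 μ] with t hpos hneg ha hna h0
    rw [hna, Pi.neg_apply, negPart_def, hneg, posPart_def, hpos, Pi.sup_apply, Pi.sup_apply, ha, h0,
      Pi.neg_apply, Pi.zero_apply]
    rcases le_total (a t) 0 with h | h <;> simp [h]

end IsSurjectiveSphereIsometry

theorem tingley_L1_sigma_finite_general
    {Ω : Type*} [MeasurableSpace Ω] (μ : Measure Ω)
    {Y : Type*} [NormedAddCommGroup Y] [NormedSpace ℝ Y]
    (Δ : Lp ℝ 1 μ → Y)
    (hmap : ∀ f : Lp ℝ 1 μ, ‖f‖ = 1 → ‖Δ f‖ = 1)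
    (hsurj : ∀ y : Y, ‖y‖ = 1 → ∃ f : Lp ℝ 1 μ, ‖f‖ = 1 ∧ Δ f = y)
    (hiso : ∀ f g : Lp ℝ 1 μ, ‖f‖ = 1 → ‖g‖ = 1 → ‖Δ f - Δ g‖ = ‖f - g‖) :
    ∃! T : Lp ℝ 1 μ ≃ₗᵢ[ℝ] Y, ∀ f : Lp ℝ 1 μ, ‖f‖ = 1 → T f = Δ f := by
  have hΔ : IsSurjectiveSphereIsometry Δ := ⟨hmap, hsurj, hiso⟩
  obtain ⟨T, hT⟩ := exists_linearIsometryEquiv_of_radialExtension_add hmap hsurj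
    (fun u hu => hΔ.map_neg hu) hΔ.radialExtension_add
  exact ⟨T, hT, fun T' hT' =>
    LinearIsometryEquiv.ext_of_norm_eq_one fun f hf => (hT' f hf).trans (hT f hf).symm⟩

/-- (Tan) Every surjective isometry from the unit sphere of a real `L¹` space over a σ-finite
measure space onto the unit sphere of a real Banach space extends uniquely to a surjective
real-linear isometry between the spaces. -/
theorem tingley_L1_sigma_finite
    {Ω : Type*} [MeasurableSpace Ω] (μ : Measure Ω) [SigmaFinite μ]
    {Y : Type*} [NormedAddCommGroup Y] [NormedSpace ℝ Y] [CompleteSpace Y]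
    (Δ : Lp ℝ 1 μ → Y)
    (hmap : ∀ f : Lp ℝ 1 μ, ‖f‖ = 1 → ‖Δ f‖ = 1)
    (hsurj : ∀ y : Y, ‖y‖ = 1 → ∃ f : Lp ℝ 1 μ, ‖f‖ = 1 ∧ Δ f = y)
    (hiso : ∀ f g : Lp ℝ 1 μ, ‖f‖ = 1 → ‖g‖ = 1 → ‖Δ f - Δ g‖ = ‖f - g‖) :
    ∃! T : Lp ℝ 1 μ ≃ₗᵢ[ℝ] Y, ∀ f : Lp ℝ 1 μ, ‖f‖ = 1 → T f = Δ f :=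
  tingley_L1_sigma_finite_general μ Δ hmap hsurj hiso
end
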